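/- arXiv:2409.17540 — 9 statements merged into one kernel-verified Lean document; each statement's English description precedes it below -/
import Mathlib

section
/- Let k ≥ 1 and n = k(k+1), and let μ = (2k, 2k, 2k-2, 2k-2, ..., 4, 4, 2, 2), a partition of 2n. Then the transpose of μ is given by (μᵗ)_i = 2⌈(2k+1-i)/2⌉ for 1 ≤ i ≤ 2k, and the C-collapse of μᵗ equals μ, so μ is self-dual under the type C Spaltenstein map d(ν) = (νᵗ)_C. -/
/-- A partition of `n`, encoded as an antitone function `ℕ → ℕ` supported on
`{0, ..., n-1}` with total sum `n`. -/
def IsPartitionOf (n : ℕ) (f : ℕ → ℕ) : Prop :=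
  Antitone f ∧ (∀ i, n ≤ i → f i = 0) ∧ ∑ i ∈ Finset.range n, f i = n

/-- The transpose (conjugate) partition: `(conjMap n f) i = #{j < n : f j ≥ i + 1}`. -/
def conjMap (n : ℕ) (f : ℕ → ℕ) : ℕ → ℕ :=
  fun i => ((Finset.range n).filter (fun j => i < f j)).card

/-- Dominance order: every partial sum of `f` is at most that of `g`. -/
def DomLE (f g : ℕ → ℕ) : Prop :=
  ∀ k, ∑ i ∈ Finset.range k, f i ≤ ∑ i ∈ Finset.range k, g i

/-- Membership in `P_{-1}(n)`: every odd part occurs with even multiplicity. -/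
def OddPartsEvenMult (n : ℕ) (f : ℕ → ℕ) : Prop :=
  ∀ m, Odd m → Even (((Finset.range n).filter (fun i => f i = m)).card)

lemma sum2 (k : ℕ) : ∑ i ∈ Finset.range (2*k), 2*(k - i/2) = 2*(k*(k+1)) := by
  induction k with
  | zero => simp
  | succ k ih =>
    have h2 : 2*(k+1) = 2*k + 1 + 1 := by ring
    rw [h2, Finset.sum_range_succ, Finset.sum_range_succ]
    have hs : ∑ i ∈ Finset.range (2*k), 2*(k+1 - i/2)
        = ∑ i ∈ Finset.range (2*k), (2*(k - i/2) + 2) := by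
      apply Finset.sum_congr rfl
      intro i hi
      rw [Finset.mem_range] at hi
      omega
    rw [hs, Finset.sum_add_distrib, ih]
    simp only [Finset.sum_const, Finset.card_range, smul_eq_mul]
    have e1 : k+1 - (2*k)/2 = 1 := by omega
    have e2 : k+1 - (2*k+1)/2 = 1 := by omega
    rw [e1, e2]; ring

lemma keyconj (k : ℕ) :
    conjMap (2 * (k * (k + 1))) (fun i => 2 * (k - i / 2)) = fun i => 2 * (k - i / 2) := by
  funext i
  unfold conjMap
  have hn : k ≤ k*(k+1) := Nat.le_mul_of_pos_right k (by omega)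
  have hfe : ((Finset.range (2*(k*(k+1)))).filter (fun j => i < 2*(k - j/2)))
      = Finset.range (2*(k - i/2)) := by
    ext j
    simp only [Finset.mem_filter, Finset.mem_range]
    omega
  rw [hfe, Finset.card_range]

/-- Let `k ≥ 1`, `n = k(k+1)`, and `μ = (2k, 2k, 2k-2, 2k-2, ..., 2, 2)`
(a partition of `2n`, encoded 0-indexed as `μ i = 2(k - ⌊i/2⌋)`). Then:
(a) `μ` is a partition of `2n`;
(b) its transpose satisfies `(μᵗ)_i = 2⌈(2k+1-i)/2⌉` for `1 ≤ i ≤ 2k` (0-indexed: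
    `conjMap (2n) μ i = 2 * ((2k - i + 1)/2)` for `i < 2k`);
(c) the C-collapse of `μᵗ` equals `μ`, i.e. `μ` is the greatest element (w.r.t. dominance)
    of the set of partitions of `2n` lying in `P_{-1}(2n)` and dominated by `μᵗ`;
hence `μ` is self-dual under the type C Spaltenstein map `d(ν) = (νᵗ)_C`. -/
theorem typeC_selfdual_minimal_solvable (k : ℕ) (hk : 1 ≤ k) :
    IsPartitionOf (2 * (k * (k + 1))) (fun i => 2 * (k - i / 2)) ∧
    (∀ i < 2 * k,
      conjMap (2 * (k * (k + 1))) (fun i => 2 * (k - i / 2)) i = 2 * ((2 * k - i + 1) / 2)) ∧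
    (OddPartsEvenMult (2 * (k * (k + 1))) (fun i => 2 * (k - i / 2)) ∧
      DomLE (fun i => 2 * (k - i / 2))
        (conjMap (2 * (k * (k + 1))) (fun i => 2 * (k - i / 2))) ∧
      ∀ g : ℕ → ℕ,
        IsPartitionOf (2 * (k * (k + 1))) g →
        OddPartsEvenMult (2 * (k * (k + 1))) g →
        DomLE g (conjMap (2 * (k * (k + 1))) (fun i => 2 * (k - i / 2))) →
        DomLE g (fun i => 2 * (k - i / 2))) := by

  have hn : k ≤ k*(k+1) := Nat.le_mul_of_pos_right k (by omega)
  have hc := keyconj k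
  refine ⟨⟨?_, ?_, ?_⟩, ?_, ?_, ?_, ?_⟩
  · intro a b hab
    have := Nat.div_le_div_right (c := 2) hab
    show 2 * (k - b / 2) ≤ 2 * (k - a / 2)
    omega
  · intro i hi
    show 2 * (k - i / 2) = 0
    omega
  · have he : ∑ i ∈ Finset.range (2*(k*(k+1))), 2*(k - i/2)
        = ∑ i ∈ Finset.range (2*k), 2*(k - i/2) := by
      refine (Finset.sum_subset (Finset.range_subset_range.mpr (by omega)) ?_).symm
      intro i _ hi
      rw [Finset.mem_range] at hi
      omega
    show ∑ i ∈ Finset.range (2*(k*(k+1))), 2*(k - i/2) = 2*(k*(k+1))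
    rw [he, sum2]
  · intro i _
    rw [hc]
    show 2 * (k - i / 2) = 2 * ((2 * k - i + 1) / 2)
    omega
  · intro m hm
    obtain ⟨t, ht⟩ := hm
    have : ((Finset.range (2*(k*(k+1)))).filter (fun i => 2 * (k - i / 2) = m)) = ∅ := by
      apply Finset.filter_eq_empty_iff.mpr
      intro i _; omega
    rw [this]; simp
  · intro K; rw [hc]
  · intro g _ _ hdom
    rw [hc] at hdom
    exact hdom
end

section
/- Let k ≥ 1 and n = k². The partition μ = (2k-1, 2k-1, 2k-3, 2k-3, ..., 3, 3, 1, 1) of 2n satisfies d(μ) = μ, where d(ν) = (νᵗ)_D is the type D Spaltenstein map; that is, the D-collapse of the transpose of μ equals μ. -/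
/-- Membership in `P_1(n)`: every even (positive) part occurs with even multiplicity. -/
def EvenPartsEvenMult (n : ℕ) (f : ℕ → ℕ) : Prop :=
  ∀ m, 0 < m → Even m → Even (((Finset.range n).filter (fun i => f i = m)).card)

namespace TD

def F (k : ℕ) : ℕ → ℕ := fun i => 2 * (k - i / 2) - 1
def C (k : ℕ) : ℕ → ℕ := fun i => 2 * (k - (i + 1) / 2)

lemma F_anti (k : ℕ) : Antitone (F k) := by
  intro i j hij
  have h := Nat.div_le_div_right (c := 2) hij
  simp only [F]
  omega

lemma sum_F_even (k r : ℕ) (hr : r ≤ k) :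
    ∑ i ∈ Finset.range (2 * r), F k i = 2 * r * (2 * k - r) := by
  induction r with
  | zero => simp
  | succ r ih =>
    have h2 : 2 * (r + 1) = (2 * r) + 1 + 1 := by ring
    rw [h2, Finset.sum_range_succ, Finset.sum_range_succ, ih (by omega)]
    obtain ⟨d, hd⟩ : ∃ d, k = r + 1 + d := ⟨k - (r + 1), by omega⟩
    subst hd
    simp only [F]
    have e1 : (2 * r) / 2 = r := by omega
    have e2 : (2 * r + 1) / 2 = r := by omega
    rw [e1, e2]
    have e3 : r + 1 + d - r = d + 1 := by omega
    rw [e3]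
    have e4 : 2 * (r + 1 + d) - r = r + 2 * d + 2 := by omega
    have e5 : 2 * (r + 1 + d) - (r + 1) = r + 2 * d + 1 := by omega
    rw [e4, e5]
    have e6 : 2 * (d + 1) - 1 = 2 * d + 1 := by omega
    rw [e6]
    ring

lemma sum_F_top (k m : ℕ) (h : 2 * k ≤ m) :
    ∑ i ∈ Finset.range m, F k i = 2 * (k * k) := by
  have h1 : ∑ i ∈ Finset.range m, F k i = ∑ i ∈ Finset.range (2 * k), F k i := by
    refine (Finset.sum_subset (Finset.range_subset_range.mpr h) ?_).symm
    intro i _ hi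
    simp only [Finset.mem_range, not_lt] at hi
    simp only [F]; omega
  rw [h1, sum_F_even k k le_rfl]
  have : 2 * k - k = k := by omega
  rw [this]; ring

lemma sum_CF (k m : ℕ) (hm : m ≤ 2 * k) :
    ∑ i ∈ Finset.range m, C k i = (∑ i ∈ Finset.range m, F k i) + m % 2 := by
  induction m with
  | zero => simp
  | succ m ih =>
    rw [Finset.sum_range_succ, Finset.sum_range_succ, ih (by omega)]
    simp only [F, C]
    have h1 := Nat.div_le_div_right (c := 2) (le_of_lt (Nat.lt_succ_self m))
    omega

lemma sum_C_top (k m : ℕ) (h : 2 * k ≤ m) :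
    ∑ i ∈ Finset.range m, C k i = 2 * (k * k) := by
  have h1 : ∑ i ∈ Finset.range m, C k i = ∑ i ∈ Finset.range (2 * k), C k i := by
    refine (Finset.sum_subset (Finset.range_subset_range.mpr h) ?_).symm
    intro i _ hi
    simp only [Finset.mem_range, not_lt] at hi
    simp only [C]; omega
  rw [h1, sum_CF k (2 * k) le_rfl, sum_F_top k (2 * k) le_rfl]
  omega

lemma conj_eq (k : ℕ) (N : ℕ) (hN : 2 * k ≤ N) (i : ℕ) :
    conjMap N (F k) i = C k i := by
  have : (Finset.range N).filter (fun j => i < F k j) = Finset.range (C k i) := by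
    ext j
    rw [Finset.mem_filter]
    simp only [Finset.mem_filter, Finset.mem_range, F, C]
    omega
  simp only [conjMap, F] at this ⊢
  rw [this]
  simp [C]

lemma parity_sum (m : ℕ) (g : ℕ → ℕ) :
    (∑ i ∈ Finset.range m, g i) % 2
      = ((Finset.range m).filter (fun i => ¬ Even (g i))).card % 2 := by
  rw [Finset.sum_nat_mod]
  have h1 : ∑ i ∈ Finset.range m, g i % 2
      = ∑ i ∈ Finset.range m, (if ¬ Even (g i) then 1 else 0) := by
    refine Finset.sum_congr rfl fun i _ => ?_
    rcases Nat.even_or_odd (g i) with h | h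
    · simp [h, Nat.even_iff.mp h]
    · simp [Nat.odd_iff.mp h, Nat.not_even_iff_odd.mpr h]
  rw [h1, ← Finset.card_filter]

lemma even_card_evens (N : ℕ) (g : ℕ → ℕ) (hg : Antitone g)
    (hP : EvenPartsEvenMult N g) (b : ℕ) (hb : 0 < b) :
    Even (((Finset.range N).filter (fun i => Even (g i) ∧ b ≤ g i)).card) := by
  have key : (Finset.range N).filter (fun i => Even (g i) ∧ b ≤ g i)
      = ((Finset.Icc b (g 0)).filter (fun v => Even v)).biUnion
          (fun v => (Finset.range N).filter (fun i => g i = v)) := by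
    ext i
    simp only [Finset.mem_filter, Finset.mem_biUnion, Finset.mem_Icc, Finset.mem_range]
    constructor
    · rintro ⟨hiN, hev, hbi⟩
      exact ⟨g i, ⟨⟨hbi, hg (Nat.zero_le i)⟩, hev⟩, hiN, rfl⟩
    · rintro ⟨v, ⟨⟨hbv, _⟩, hev⟩, hiN, hgi⟩
      exact ⟨hiN, hgi ▸ hev, hgi ▸ hbv⟩
  rw [key, Finset.card_biUnion]
  · refine Finset.even_sum _ ?_
    intro v hv
    simp only [Finset.mem_filter, Finset.mem_Icc] at hv
    exact hP v (lt_of_lt_of_le hb hv.1.1) hv.2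
  · intro v hv w hw hvw
    simp only [Finset.disjoint_left, Finset.mem_filter]
    rintro a ⟨_, rfl⟩ ⟨_, h2⟩
    exact hvw h2

end TD

/-- Let `k ≥ 1`, `n = k²`, and
`μ = (2k-1, 2k-1, 2k-3, 2k-3, ..., 3, 3, 1, 1)` (a partition of `2n`, encoded 0-indexed
as `μ i = 2(k - ⌊i/2⌋) - 1`). Then `d(μ) = μ` for the type D Spaltenstein map
`d(ν) = (νᵗ)_D`; i.e. `μ` is a partition of `2n` and `μ` is the greatest element (w.r.t.
dominance) of the set of partitions of `2n` lying in `P_1(2n)` and dominated by `μᵗ`,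
i.e. the D-collapse of the transpose of `μ` equals `μ`. -/
theorem typeD_selfdual_minimal_solvable (k : ℕ) (hk : 1 ≤ k) :
    IsPartitionOf (2 * (k * k)) (fun i => 2 * (k - i / 2) - 1) ∧
    EvenPartsEvenMult (2 * (k * k)) (fun i => 2 * (k - i / 2) - 1) ∧
    DomLE (fun i => 2 * (k - i / 2) - 1)
      (conjMap (2 * (k * k)) (fun i => 2 * (k - i / 2) - 1)) ∧
    ∀ g : ℕ → ℕ,
      IsPartitionOf (2 * (k * k)) g →
      EvenPartsEvenMult (2 * (k * k)) g →
      DomLE g (conjMap (2 * (k * k)) (fun i => 2 * (k - i / 2) - 1)) →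
      DomLE g (fun i => 2 * (k - i / 2) - 1) := by
  set N := 2 * (k * k) with hNdef
  have hkk : 2 * k ≤ N := by
    have : k * 1 ≤ k * k := Nat.mul_le_mul_left k hk
    omega
  have hFeq : (fun i => 2 * (k - i / 2) - 1) = TD.F k := rfl
  rw [hFeq]
  have hconj : ∀ i, conjMap N (TD.F k) i = TD.C k i := TD.conj_eq k N hkk
  refine ⟨⟨TD.F_anti k, ?_, TD.sum_F_top k N hkk⟩, ?_, ?_, ?_⟩
  · intro i hi
    simp only [TD.F]
    omega
  · intro m hm hev
    have : (Finset.range N).filter (fun i => TD.F k i = m) = ∅ := by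
      rw [Finset.filter_eq_empty_iff]
      intro i _
      rw [Nat.even_iff] at hev
      simp only [TD.F]
      omega
    rw [this]
    simp
  · intro m
    rw [Finset.sum_congr rfl (fun i _ => (hconj i))]
    by_cases hm : m ≤ 2 * k
    · rw [TD.sum_CF k m hm]; omega
    · rw [TD.sum_C_top k m (by omega), TD.sum_F_top k m (by omega)]
  · intro g hgp hgP hgdom m
    obtain ⟨hganti, hgzero, hgsum⟩ := hgp
    have hgc : ∀ j, ∑ i ∈ Finset.range j, g i ≤ ∑ i ∈ Finset.range j, TD.C k i := by
      intro j
      have := hgdom j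
      rwa [Finset.sum_congr rfl (fun i _ => (hconj i))] at this
    have hgbound : ∀ j, ∑ i ∈ Finset.range j, g i ≤ N := by
      intro j
      by_cases hj : j ≤ N
      · calc ∑ i ∈ Finset.range j, g i ≤ ∑ i ∈ Finset.range N, g i :=
              Finset.sum_le_sum_of_subset (Finset.range_subset_range.mpr hj)
          _ = N := hgsum
      · have : ∑ i ∈ Finset.range j, g i = ∑ i ∈ Finset.range N, g i := by
          refine (Finset.sum_subset (Finset.range_subset_range.mpr (by omega)) ?_).symm
          intro i _ hi
          simp only [Finset.mem_range, not_lt] at hi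
          exact hgzero i hi
        rw [this, hgsum]
    by_cases h2k : 2 * k ≤ m
    · rw [TD.sum_F_top k m h2k]
      exact hgbound m
    by_cases hpar : m % 2 = 0
    · have := hgc m
      rw [TD.sum_CF k m (by omega), hpar] at this
      omega
    -- m odd, m < 2k: contradiction argument
    by_contra hcon
    push_neg at hcon
    obtain ⟨r, hr⟩ : ∃ r, m = 2 * r + 1 := ⟨m / 2, by omega⟩
    subst hr
    have hrk : r + 1 ≤ k := by omega
    have hSgSc : ∑ i ∈ Finset.range (2 * r + 1), g i
        = ∑ i ∈ Finset.range (2 * r + 1), TD.C k i := by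
      have h1 := hgc (2 * r + 1)
      have h2 : ∑ i ∈ Finset.range (2 * r + 1), TD.C k i
          = (∑ i ∈ Finset.range (2 * r + 1), TD.F k i) + 1 := by
        rw [TD.sum_CF k (2 * r + 1) (by omega)]; omega
      omega
    -- g (2r) ≥ 2(k-r)
    have hCr : TD.C k (2 * r) = 2 * (k - r) := by
      simp only [TD.C]
      omega
    have hCr1 : TD.C k (2 * r + 1) = 2 * (k - (r + 1)) := by
      simp only [TD.C]
      omega
    have hb1 : 2 * (k - r) ≤ g (2 * r) := by
      have h1 : ∑ i ∈ Finset.range (2 * r + 1), g i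
          = (∑ i ∈ Finset.range (2 * r), g i) + g (2 * r) := Finset.sum_range_succ _ _
      have h2 : ∑ i ∈ Finset.range (2 * r + 1), TD.C k i
          = (∑ i ∈ Finset.range (2 * r), TD.C k i) + TD.C k (2 * r) :=
        Finset.sum_range_succ _ _
      have h3 := hgc (2 * r)
      rw [hCr] at h2
      omega
    have hb2 : g (2 * r + 1) ≤ 2 * (k - (r + 1)) := by
      have h1 : ∑ i ∈ Finset.range (2 * r + 1 + 1), g i
          = (∑ i ∈ Finset.range (2 * r + 1), g i) + g (2 * r + 1) := Finset.sum_range_succ _ _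
      have h2 : ∑ i ∈ Finset.range (2 * r + 1 + 1), TD.C k i
          = (∑ i ∈ Finset.range (2 * r + 1), TD.C k i) + TD.C k (2 * r + 1) :=
        Finset.sum_range_succ _ _
      have h3 := hgc (2 * r + 1 + 1)
      rw [hCr1] at h2
      omega
    -- the partial sum is even
    have hSgeven : (∑ i ∈ Finset.range (2 * r + 1), g i) % 2 = 0 := by
      have hSf : ∑ i ∈ Finset.range (2 * r + 1), TD.F k i
          = (2 * r * (2 * k - r)) + (2 * (k - r) - 1) := by
        rw [Finset.sum_range_succ, TD.sum_F_even k r (by omega)]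
        simp only [TD.F]
        omega
      have h2 : ∑ i ∈ Finset.range (2 * r + 1), TD.C k i
          = (∑ i ∈ Finset.range (2 * r + 1), TD.F k i) + 1 := by
        rw [TD.sum_CF k (2 * r + 1) (by omega)]; omega
      have h3 : 2 * r * (2 * k - r) = 2 * (r * (2 * k - r)) := by ring
      rw [hSgSc, h2, hSf, h3]
      omega
    -- number of odd parts among first 2r+1 is even
    have hodd : ((Finset.range (2 * r + 1)).filter (fun i => ¬ Even (g i))).card % 2 = 0 := by
      rw [← TD.parity_sum]; exact hSgeven
    -- number of even parts among first 2r+1 is even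
    have hfeq : (Finset.range (2 * r + 1)).filter (fun i => Even (g i))
        = (Finset.range N).filter (fun i => Even (g i) ∧ g (2 * r) ≤ g i) := by
      ext i
      simp only [Finset.mem_filter, Finset.mem_range]
      constructor
      · rintro ⟨him, hev⟩
        exact ⟨by omega, hev, hganti (by omega : i ≤ 2 * r)⟩
      · rintro ⟨hiN, hev, hbi⟩
        refine ⟨?_, hev⟩
        by_contra hlt
        have h5 : g i ≤ g (2 * r + 1) := hganti (by omega)
        omega
    have heven : Even (((Finset.range (2 * r + 1)).filter (fun i => Even (g i))).card) := by
      rw [hfeq]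
      exact TD.even_card_evens N g hganti hgP (g (2 * r)) (by omega)
    have hsplit := Finset.card_filter_add_card_filter_not
      (s := Finset.range (2 * r + 1)) (p := fun i => Even (g i))
    rw [Nat.even_iff] at heven
    simp only [Finset.card_range] at hsplit
    omega
end

section
/- For every partition λ of 2n+1 there exists a unique largest partition (in dominance order) λ_B among partitions of 2n+1 in which every even part occurs with even multiplicity, such that λ_B ≤_dom λ; i.e., the set {μ ∈ P_1(2n+1) : μ ≤_dom λ} has a greatest element. -/
open Finset

namespace BColl

def T (m : ℕ) (f : ℕ → ℕ) (k : ℕ) : ℕ := ∑ i ∈ range m, (f i - k)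

lemma parts_le {m : ℕ} {f : ℕ → ℕ} (hf : IsPartitionOf m f) (i : ℕ) : f i ≤ m := by
  rcases le_or_gt m i with h | h
  · simp [hf.2.1 i h]
  · calc f i ≤ ∑ j ∈ range m, f j :=
        Finset.single_le_sum (fun j _ => Nat.zero_le _) (mem_range.2 h)
      _ = m := hf.2.2

lemma sum_eq_of_le {m : ℕ} {f : ℕ → ℕ} (hf : IsPartitionOf m f) {k : ℕ} (h : m ≤ k) :
    ∑ i ∈ range k, f i = m := by
  rw [← hf.2.2]
  exact (Finset.sum_subset (range_subset_range.2 h)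
    (fun x _ hx => hf.2.1 x (by simpa using hx))).symm

lemma min_le_partial {m : ℕ} {f : ℕ → ℕ} (hf : IsPartitionOf m f) (k : ℕ) :
    min k m ≤ ∑ i ∈ range k, f i := by
  rcases le_or_gt m k with h | h
  · rw [sum_eq_of_le hf h]; omega
  · by_cases hk : f k = 0
    · have h2 : ∑ i ∈ range m, f i = ∑ i ∈ range k, f i := by
        refine (Finset.sum_subset (range_subset_range.2 h.le) (fun x _ hx => ?_)).symm
        have hkx : k ≤ x := by simpa using hx
        have := hf.1 hkx
        omega
      have := hf.2.2
      omega
    · have h1 : ∀ i ∈ range k, 1 ≤ f i := by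
        intro i hi
        have := hf.1 (le_of_lt (mem_range.1 hi))
        omega
      calc min k m ≤ k := min_le_left _ _
        _ = ∑ _i ∈ range k, 1 := by simp
        _ ≤ _ := Finset.sum_le_sum h1

lemma filter_eq_range {m k : ℕ} {p : ℕ → ℕ} (hp : Antitone p) :
    (range m).filter (fun i => k < p i)
      = range (((range m).filter (fun i => k < p i)).card) := by
  ext i
  simp only [mem_range]
  constructor
  · intro hi
    have hi' := mem_filter.1 hi
    have hsub : range (i+1) ⊆ (range m).filter (fun i => k < p i) := by
      intro j hj
      have hj' : j ≤ i := by simpa [Nat.lt_succ_iff] using hj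
      refine mem_filter.2 ⟨mem_range.2 (lt_of_le_of_lt hj' (mem_range.1 hi'.1)), ?_⟩
      exact lt_of_lt_of_le hi'.2 (hp hj')
    have := Finset.card_le_card hsub
    simpa using this
  · intro hi
    by_contra hns
    have hsub : (range m).filter (fun i => k < p i) ⊆ range i := by
      intro j hj
      rw [mem_range]
      by_contra hji
      push_neg at hji
      have hj' := mem_filter.1 hj
      have h1 : k < p i := lt_of_lt_of_le hj'.2 (hp hji)
      exact hns (mem_filter.2 ⟨mem_range.2 (lt_of_le_of_lt hji (mem_range.1 hj'.1)), h1⟩)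
    have := Finset.card_le_card hsub
    simp at this
    omega

lemma T_add_eq {m : ℕ} {f : ℕ → ℕ} (hf : Antitone f) (k : ℕ) :
    T m f k + ((range m).filter (fun i => k < f i)).card * k
      = ∑ i ∈ range (((range m).filter (fun i => k < f i)).card), f i := by
  set l := ((range m).filter (fun i => k < f i)).card with hl
  have hfil : (range m).filter (fun i => k < f i) = range l := filter_eq_range hf
  have h1 : T m f k = ∑ i ∈ range l, (f i - k) := by
    rw [T, ← Finset.sum_filter_add_sum_filter_not (range m) (fun i => k < f i)
      (fun i => f i - k), hfil]
    have h2 : ∑ i ∈ (range m).filter (fun i => ¬ k < f i), (f i - k) = 0 :=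
      Finset.sum_eq_zero (fun i hi => by have := (mem_filter.1 hi).2; omega)
    omega
  have hmem : ∀ i ∈ range l, k < f i := by
    intro i hi
    rw [← hfil] at hi
    exact (mem_filter.1 hi).2
  rw [h1]
  calc ∑ i ∈ range l, (f i - k) + l * k = ∑ i ∈ range l, ((f i - k) + k) := by
        rw [Finset.sum_add_distrib, Finset.sum_const, card_range, smul_eq_mul]
    _ = ∑ i ∈ range l, f i :=
        Finset.sum_congr rfl (fun i hi => by have := hmem i hi; omega)

lemma partial_le_T {m : ℕ} (f : ℕ → ℕ) {l : ℕ} (hl : l ≤ m) (k : ℕ) :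
    ∑ i ∈ range l, f i ≤ T m f k + l * k := by
  have h3 : ∑ i ∈ range l, (f i - k) ≤ T m f k :=
    Finset.sum_le_sum_of_subset (range_subset_range.2 hl)
  calc ∑ i ∈ range l, f i ≤ ∑ i ∈ range l, ((f i - k) + k) :=
        Finset.sum_le_sum (fun i _ => by omega)
    _ = ∑ i ∈ range l, (f i - k) + l * k := by
        rw [Finset.sum_add_distrib, Finset.sum_const, card_range, smul_eq_mul]
    _ ≤ T m f k + l * k := Nat.add_le_add_right h3 _

lemma domLE_iff_T {m : ℕ} {f g : ℕ → ℕ} (hf : IsPartitionOf m f) (hg : IsPartitionOf m g) :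
    DomLE f g ↔ ∀ k, T m f k ≤ T m g k := by
  constructor
  · intro hd k
    set l := ((range m).filter (fun i => k < f i)).card with hl
    have hlm : l ≤ m := le_trans (card_filter_le _ _) (by simp)
    have h1 := T_add_eq (m := m) hf.1 k
    have h2 := hd l
    have h3 := partial_le_T g hlm k
    have h4 : T m f k + l * k ≤ T m g k + l * k := by
      rw [h1]; exact le_trans h2 h3
    exact Nat.le_of_add_le_add_right h4
  · intro hT l
    rcases le_or_gt m l with h | h
    · rw [sum_eq_of_le hf h, sum_eq_of_le hg h]
    · set k := g l with hk
      set l' := ((range m).filter (fun i => k < g i)).card with hl'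
      have hfil : (range m).filter (fun i => k < g i) = range l' := filter_eq_range hg.1
      have hl'l : l' ≤ l := by
        by_contra hc
        push_neg at hc
        have h1 : l ∈ range l' := mem_range.2 hc
        rw [← hfil] at h1
        have := (mem_filter.1 h1).2
        omega
      have heq : T m g k + l' * k = ∑ i ∈ range l', g i := T_add_eq hg.1 k
      have hconst : ∀ i ∈ Finset.Ico l' l, g i = k := by
        intro i hi
        have hi' := Finset.mem_Ico.1 hi
        have h1 : g i ≤ k := by
          by_contra hc
          push_neg at hc
          have : i ∈ range l' := by
            rw [← hfil]; exact mem_filter.2 ⟨mem_range.2 (by omega), hc⟩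
          rw [mem_range] at this
          omega
        have h2 : k ≤ g i := hg.1 (show i ≤ l by omega)
        omega
      have hIco : ∑ i ∈ Finset.Ico l' l, g i = (l - l') * k := by
        rw [Finset.sum_congr rfl hconst, Finset.sum_const, Nat.card_Ico, smul_eq_mul]
      have hsplit : ∑ i ∈ range l', g i + ∑ i ∈ Finset.Ico l' l, g i = ∑ i ∈ range l, g i := by
        rw [range_eq_Ico, range_eq_Ico]
        exact Finset.sum_Ico_consecutive g (Nat.zero_le l') hl'l
      have hFg : ∑ i ∈ range l, g i = T m g k + l * k := by
        rw [← hsplit, ← heq, hIco, add_assoc, ← Nat.add_mul]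
        congr 2
        omega
      have h5 := partial_le_T f (le_of_lt h) k
      rw [hFg]
      exact le_trans h5 (Nat.add_le_add_right (hT k) _)

lemma T_succ (m : ℕ) (f : ℕ → ℕ) (k : ℕ) :
    T m f k = T m f (k+1) + ((range m).filter (fun i => k + 1 ≤ f i)).card := by
  rw [T, T, Finset.card_filter, ← Finset.sum_add_distrib]
  exact Finset.sum_congr rfl (fun i _ => by split_ifs with h <;> omega)

lemma count_split (m : ℕ) (f : ℕ → ℕ) (v : ℕ) :
    ((range m).filter (fun i => v ≤ f i)).card
      = ((range m).filter (fun i => f i = v)).card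
        + ((range m).filter (fun i => v + 1 ≤ f i)).card := by
  rw [Finset.card_filter, Finset.card_filter, Finset.card_filter, ← Finset.sum_add_distrib]
  exact Finset.sum_congr rfl (fun i _ => by split_ifs <;> omega)

lemma T_convex_mult (m : ℕ) (f : ℕ → ℕ) (k : ℕ) :
    T m f k + T m f (k+2) = 2 * T m f (k+1) + ((range m).filter (fun i => f i = k+1)).card := by
  have h1 := T_succ m f k
  have h2 := T_succ m f (k+1)
  have h3 := count_split m f (k+1)
  have e : k + 1 + 1 = k + 2 := by omega
  rw [e] at h2 h3
  omega

lemma T_zero_of_ge {m : ℕ} {f : ℕ → ℕ} (hf : IsPartitionOf m f) {k : ℕ} (h : m ≤ k) :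
    T m f k = 0 :=
  Finset.sum_eq_zero (fun i _ => by have := parts_le hf i; omega)

lemma epem_T_even {m : ℕ} {f : ℕ → ℕ} (hf : IsPartitionOf m f)
    (he : EvenPartsEvenMult m f) : ∀ k, Odd k → Even (T m f k) := by
  have key : ∀ d k, Odd k → m ≤ k + 2 * d → Even (T m f k) := by
    intro d
    induction d with
    | zero =>
      intro k _ hk
      rw [T_zero_of_ge hf (by omega)]
      exact Even.zero
    | succ d ih =>
      intro k hk hkd
      by_cases hmk : m ≤ k
      · rw [T_zero_of_ge hf hmk]; exact Even.zero
      · obtain ⟨j, hj⟩ := hk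
        have h2 : Even (T m f (k+2)) := ih (k+2) ⟨j+1, by omega⟩ (by omega)
        have h3 := T_convex_mult m f k
        have h4 : Even (((range m).filter (fun i => f i = k+1)).card) :=
          he (k+1) (by omega) ⟨j+1, by omega⟩
        rw [Nat.even_iff] at h2 h4 ⊢
        omega
  intro k hk
  obtain ⟨j, hj⟩ := hk
  exact key m k ⟨j, hj⟩ (by omega)

lemma T_even_epem {m : ℕ} (f : ℕ → ℕ)
    (he : ∀ k, Odd k → Even (T m f k)) : EvenPartsEvenMult m f := by
  intro v hv hev
  obtain ⟨j, hj⟩ := hev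
  have h1 : Even (T m f (v-1)) := he (v-1) ⟨j-1, by omega⟩
  have h2 : Even (T m f (v+1)) := he (v+1) ⟨j, by omega⟩
  have h3 := T_convex_mult m f (v-1)
  rw [show v - 1 + 1 = v by omega, show v - 1 + 2 = v + 1 by omega] at h3
  rw [Nat.even_iff] at h1 h2 ⊢
  omega

lemma card_range_filter_le (N k : ℕ) :
    ((range N).filter (fun x => k ≤ x)).card = N - k := by
  have h : (range N).filter (fun x => k ≤ x) = Finset.Ico k N := by
    ext x
    simp only [mem_filter, mem_range, Finset.mem_Ico]
    omega
  rw [h, Nat.card_Ico]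

lemma reconstruct {m : ℕ} (D : ℕ → ℕ) (hD0 : D 0 = m)
    (hmono : ∀ k, D (k+1) ≤ D k)
    (hconv : ∀ k, 2 * D (k+1) ≤ D k + D (k+2))
    (hDm : D m = 0) :
    ∃ g : ℕ → ℕ, IsPartitionOf m g ∧ ∀ k, T m g k = D k := by
  set e : ℕ → ℕ := fun k => D k - D (k+1) with he
  have hea : Antitone e := antitone_nat_of_succ_le (fun k => by
    have h1 := hconv k
    have h2 := hmono k
    have h3 := hmono (k+1)
    simp only [he, show k+1+1 = k+2 from by omega]
    omega)
  have hDanti : Antitone D := antitone_nat_of_succ_le hmono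
  have heb : ∀ k, e k ≤ m := by
    intro k
    have h1 : e k ≤ e 0 := hea (Nat.zero_le k)
    have h2 := hmono 0
    simp only [he] at h1 ⊢
    omega
  set g : ℕ → ℕ := fun i => ((range m).filter (fun k => i < e k)).card with hg
  have hfil : ∀ i, (range m).filter (fun k => i < e k) = range (g i) :=
    fun i => filter_eq_range hea
  have htel : ∀ a b, a ≤ b → ∑ k ∈ Finset.Ico a b, e k = D a - D b := by
    intro a b hab
    induction b, hab using Nat.le_induction with
    | base => simp
    | succ b hab ih =>
      rw [Finset.sum_Ico_succ_top hab, ih]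
      have h1 := hmono b
      have h2 : D b ≤ D a := hDanti hab
      simp only [he]
      omega
  refine ⟨g, ⟨?_, ?_, ?_⟩, ?_⟩
  · intro i j hij
    apply Finset.card_le_card
    intro x hx
    have hx' := mem_filter.1 hx
    exact mem_filter.2 ⟨hx'.1, lt_of_le_of_lt hij hx'.2⟩
  · intro i him
    simp only [hg]
    rw [Finset.card_eq_zero, Finset.filter_eq_empty_iff]
    intro k _
    have := heb k
    omega
  · have hswap : ∑ i ∈ range m, g i
        = ∑ k ∈ range m, ((range m).filter (fun i => i < e k)).card := by
      simp only [hg, Finset.card_filter]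
      exact Finset.sum_comm
    rw [hswap]
    have hinner : ∀ k ∈ range m, ((range m).filter (fun i => i < e k)).card = e k := by
      intro k _
      have h1 : (range m).filter (fun i => i < e k) = range (e k) := by
        ext x
        simp only [mem_filter, mem_range]
        have := heb k
        omega
      rw [h1, card_range]
    rw [Finset.sum_congr rfl hinner, range_eq_Ico, htel 0 m (Nat.zero_le m), hD0, hDm]
    omega
  · intro k
    rcases le_or_gt m k with hmk | hmk
    · have h1 : T m g k = 0 := Finset.sum_eq_zero (fun i _ => by
        have h2 : g i ≤ m := by
          simp only [hg]
          exact le_trans (card_filter_le _ _) (by simp)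
        omega)
      have h2 : D k = 0 := Nat.le_antisymm (hDm ▸ hDanti hmk) (Nat.zero_le _)
      omega
    · have hstepA : ∀ i, g i - k
          = ((range m).filter (fun k' => i < e k' ∧ k ≤ k')).card := by
        intro i
        have hB : (range m).filter (fun k' => i < e k' ∧ k ≤ k')
            = (range (g i)).filter (fun k' => k ≤ k') := by
          ext x
          rw [mem_filter, mem_filter, ← hfil i, mem_filter]
          tauto
        rw [hB, card_range_filter_le]
      have hC : T m g k
          = ∑ i ∈ range m, ∑ k' ∈ range m, (if i < e k' ∧ k ≤ k' then 1 else 0) := by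
        rw [T]
        refine Finset.sum_congr rfl (fun i _ => ?_)
        rw [hstepA i, Finset.card_filter]
      rw [hC, Finset.sum_comm]
      have hinner : ∀ k' ∈ range m,
          ∑ i ∈ range m, (if i < e k' ∧ k ≤ k' then 1 else 0)
            = if k ≤ k' then e k' else 0 := by
        intro k' _
        by_cases hkk : k ≤ k'
        · simp only [hkk, and_true, if_true]
          rw [← Finset.card_filter]
          have h1 : (range m).filter (fun i => i < e k') = range (e k') := by
            ext x
            simp only [mem_filter, mem_range]
            have := heb k'
            omega
          rw [h1, card_range]
        · simp [hkk]
      rw [Finset.sum_congr rfl hinner, ← Finset.sum_filter]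
      have h1 : (range m).filter (fun k' => k ≤ k') = Finset.Ico k m := by
        ext x
        simp only [mem_filter, mem_range, Finset.mem_Ico]
        omega
      rw [h1, htel k m hmk.le, hDm]
      omega

end BColl

open Finset BColl in
/-- existence and uniqueness of the B-collapse. For every partition `λ` of
`2n+1`, the set `{μ ∈ P_1(2n+1) : μ ≤_dom λ}` has a (unique) greatest element. -/
theorem exists_unique_B_collapse (n : ℕ) (f : ℕ → ℕ) (hf : IsPartitionOf (2 * n + 1) f) :
    ∃! g : ℕ → ℕ,
      (IsPartitionOf (2 * n + 1) g ∧ EvenPartsEvenMult (2 * n + 1) g ∧ DomLE g f) ∧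
      ∀ h : ℕ → ℕ,
        (IsPartitionOf (2 * n + 1) h ∧ EvenPartsEvenMult (2 * n + 1) h ∧ DomLE h f) →
        DomLE h g := by
  set m := 2 * n + 1 with hm
  set Cand : (ℕ → ℕ) → Prop :=
    fun h => IsPartitionOf m h ∧ EvenPartsEvenMult m h ∧ DomLE h f with hC
  have hone : Cand (fun i => if i < m then 1 else 0) := by
    refine ⟨⟨?_, ?_, ?_⟩, ?_, ?_⟩
    · intro a b hab
      dsimp only
      split_ifs <;> omega
    · intro i hi
      simp only [if_neg (by omega : ¬ i < m)]
    · rw [Finset.sum_congr rfl (fun i hi => if_pos (mem_range.1 hi))]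
      simp
    · intro v hv hev
      obtain ⟨j, hj⟩ := hev
      have hemp : ((range m).filter (fun i => (if i < m then 1 else 0) = v)) = ∅ := by
        rw [Finset.filter_eq_empty_iff]
        intro i _
        split_ifs <;> omega
      rw [hemp]
      simp
    · intro k
      have h1 : ∑ i ∈ range k, (if i < m then 1 else 0) = min m k := by
        rw [← Finset.card_filter]
        have h2 : (range k).filter (fun i => i < m) = range (min m k) := by
          ext x
          simp only [mem_filter, mem_range]
          omega
        rw [h2, card_range]
      rw [h1]
      have := min_le_partial hf k
      omega
  have hTle : ∀ h, Cand h → ∀ k, T m h k ≤ T m f k := fun h hh k =>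
    ((domLE_iff_T hh.1 hf).1 hh.2.2) k
  set Ds : ℕ → Set ℕ := fun k => {t | ∃ h, Cand h ∧ T m h k = t} with hDs
  have hne : ∀ k, (Ds k).Nonempty := fun k => ⟨_, ⟨_, hone, rfl⟩⟩
  have hbdd : ∀ k, BddAbove (Ds k) := by
    intro k
    refine ⟨T m f k, ?_⟩
    rintro t ⟨h, hh, ht⟩
    exact ht ▸ hTle h hh k
  set D : ℕ → ℕ := fun k => sSup (Ds k) with hD
  have hmem : ∀ k, ∃ h, Cand h ∧ T m h k = D k := fun k => Nat.sSup_mem (hne k) (hbdd k)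
  have hub : ∀ h, Cand h → ∀ k, T m h k ≤ D k := fun h hh k =>
    le_csSup (hbdd k) ⟨h, hh, rfl⟩
  have hDle : ∀ k, D k ≤ T m f k := by
    intro k
    refine csSup_le (hne k) ?_
    rintro t ⟨h, hh, ht⟩
    exact ht ▸ hTle h hh k
  have hT0 : ∀ h : ℕ → ℕ, IsPartitionOf m h → T m h 0 = m := by
    intro h hh
    have h1 : T m h 0 = ∑ i ∈ range m, h i := by
      rw [T]
      exact Finset.sum_congr rfl (fun i _ => by omega)
    rw [h1, hh.2.2]
  have hD0 : D 0 = m := by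
    obtain ⟨h, hh, ht⟩ := hmem 0
    rw [← ht, hT0 h hh.1]
  have hTmono : ∀ (h : ℕ → ℕ) k, T m h (k+1) ≤ T m h k := fun h k =>
    Finset.sum_le_sum (fun i _ => by omega)
  have hDmono : ∀ k, D (k+1) ≤ D k := by
    intro k
    obtain ⟨h, hh, ht⟩ := hmem (k+1)
    rw [← ht]
    exact le_trans (hTmono h k) (hub h hh k)
  have hDconv : ∀ k, 2 * D (k+1) ≤ D k + D (k+2) := by
    intro k
    obtain ⟨h, hh, ht⟩ := hmem (k+1)
    have h3 := T_convex_mult m h k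
    have h1 := hub h hh k
    have h2 := hub h hh (k+2)
    omega
  have hDm : D m = 0 := by
    have h1 := hDle m
    have h2 : T m f m = 0 := T_zero_of_ge hf le_rfl
    omega
  have hDodd : ∀ k, Odd k → Even (D k) := by
    intro k hk
    obtain ⟨h, hh, ht⟩ := hmem k
    rw [← ht]
    exact epem_T_even hh.1 hh.2.1 k hk
  obtain ⟨g, hgpart, hgT⟩ := reconstruct D hD0 hDmono hDconv hDm
  have hgepem : EvenPartsEvenMult m g :=
    T_even_epem g (fun k hk => (hgT k) ▸ hDodd k hk)
  have hgdom : DomLE g f := by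
    refine (domLE_iff_T hgpart hf).2 (fun k => ?_)
    rw [hgT k]
    exact hDle k
  have hgC : Cand g := ⟨hgpart, hgepem, hgdom⟩
  have hmax : ∀ h, Cand h → DomLE h g := by
    intro h hh
    refine (domLE_iff_T hh.1 hgpart).2 (fun k => ?_)
    rw [hgT k]
    exact hub h hh k
  refine ⟨g, ⟨⟨hgpart, hgepem, hgdom⟩, hmax⟩, ?_⟩
  rintro g' ⟨hg'C, hg'max⟩
  have h1 : DomLE g' g := hmax g' hg'C
  have h2 : DomLE g g' := hg'max g hgC
  funext i
  have e1 := h1 (i+1)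
  have e2 := h2 (i+1)
  have e3 := h1 i
  have e4 := h2 i
  rw [Finset.sum_range_succ, Finset.sum_range_succ] at e1 e2
  omega
end

section
/- For every partition λ of 2n there exists a unique largest partition (in dominance order) λ_C among partitions of 2n in which every odd part occurs with even multiplicity such that λ_C ≤_dom λ; i.e., the set {μ ∈ P_{-1}(2n) : μ ≤_dom λ} has a greatest element. -/
def Sp (f : ℕ → ℕ) (k : ℕ) : ℕ := ∑ i ∈ Finset.range k, f i

lemma Sp_succ (f : ℕ → ℕ) (k : ℕ) : Sp f (k+1) = Sp f k + f k := Finset.sum_range_succ f k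

lemma Sp_zero (f : ℕ → ℕ) : Sp f 0 = 0 := rfl

lemma Sp_mono (f : ℕ → ℕ) : Monotone (Sp f) := by
  intro a b hab
  exact Finset.sum_le_sum_of_subset (Finset.range_subset_range.mpr hab)

lemma Sp_stable {N : ℕ} {f : ℕ → ℕ} (h0 : ∀ i, N ≤ i → f i = 0) {k : ℕ} (hk : N ≤ k) :
    Sp f k = Sp f N := by
  symm
  apply Finset.sum_subset (Finset.range_subset_range.mpr hk)
  intro x _ hx
  exact h0 x (by simpa using hx)

/-- the collapse defect -/
def epsF (f : ℕ → ℕ) (k : ℕ) : ℕ :=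
  if Odd (Sp f k) ∧ (f (k - 1) ≠ f k ∨ Even (f k)) then 1 else 0

/-- partial sums of the collapse -/
def Tc (f : ℕ → ℕ) (k : ℕ) : ℕ := Sp f k - epsF f k

/-- the collapse partition itself -/
def ec (f : ℕ → ℕ) (k : ℕ) : ℕ := Tc f (k + 1) - Tc f k

lemma epsF_le_one (f : ℕ → ℕ) (k : ℕ) : epsF f k ≤ 1 := by
  unfold epsF; split <;> omega

lemma epsF_one_iff (f : ℕ → ℕ) (k : ℕ) :
    epsF f k = 1 ↔ (Odd (Sp f k) ∧ (f (k - 1) ≠ f k ∨ Even (f k))) := by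
  unfold epsF
  by_cases hc : Odd (Sp f k) ∧ (f (k - 1) ≠ f k ∨ Even (f k)) <;> simp [hc]

lemma epsF_one_iff' (f : ℕ → ℕ) (k : ℕ) :
    epsF f (k + 1) = 1 ↔ (Odd (Sp f (k + 1)) ∧ (f k ≠ f (k + 1) ∨ Even (f (k + 1)))) := by
  rw [epsF_one_iff]
  rfl

lemma epsF_odd (f : ℕ → ℕ) (k : ℕ) (h : epsF f k = 1) : Odd (Sp f k) :=
  ((epsF_one_iff f k).mp h).1

lemma epsF_zero_of_even (f : ℕ → ℕ) (k : ℕ) (h : Even (Sp f k)) : epsF f k = 0 := by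
  unfold epsF
  rw [if_neg]
  rintro ⟨hodd, -⟩
  exact (Nat.not_even_iff_odd.mpr hodd) h

lemma epsF_le_Sp (f : ℕ → ℕ) (k : ℕ) : epsF f k ≤ Sp f k := by
  rcases Nat.eq_zero_or_pos (epsF f k) with h | h
  · omega
  · have h1 : epsF f k = 1 := by have := epsF_le_one f k; omega
    have := epsF_odd f k h1
    rw [Nat.odd_iff] at this
    omega

lemma Tc_add (f : ℕ → ℕ) (k : ℕ) : Tc f k + epsF f k = Sp f k :=
  Nat.sub_add_cancel (epsF_le_Sp f k)

section Main

variable {N : ℕ} {f : ℕ → ℕ}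

lemma Sp_stableN (hA : Antitone f) (h0 : ∀ i, N ≤ i → f i = 0) (hsum : Sp f N = N) :
    ∀ k, N ≤ k → Sp f k = N := fun k hk => (Sp_stable h0 hk).trans hsum

lemma fpos_of_odd (hA : Antitone f) (h0 : ∀ i, N ≤ i → f i = 0) (hsum : Sp f N = N)
    (hNe : Even N) {k : ℕ} (hodd : Odd (Sp f (k + 1))) : 1 ≤ f k := by
  by_contra hc
  push_neg at hc
  have hfk : f k = 0 := by omega
  have hzero : ∀ i, k ≤ i → f i = 0 := by
    intro i hi
    have : f i ≤ f k := hA hi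
    omega
  have hstab : Sp f (N + k + 1) = Sp f (k + 1) := by
    symm
    apply Finset.sum_subset (Finset.range_subset_range.mpr (by omega))
    intro x _ hx
    exact hzero x (by simp at hx; omega)
  have hval : Sp f (N + k + 1) = N := Sp_stableN hA h0 hsum _ (by omega)
  rw [hstab] at hval
  rw [hval] at hodd
  rw [Nat.odd_iff] at hodd
  rw [Nat.even_iff] at hNe
  omega

lemma Tc_mono (hA : Antitone f) (h0 : ∀ i, N ≤ i → f i = 0) (hsum : Sp f N = N)
    (hNe : Even N) (k : ℕ) : Tc f k ≤ Tc f (k + 1) := by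
  have e1 := Tc_add f k
  have e2 := Tc_add f (k + 1)
  have e3 := Sp_succ f k
  have e4 := epsF_le_one f k
  have e5 := epsF_le_one f (k + 1)
  rcases Nat.eq_zero_or_pos (epsF f (k + 1)) with h | h
  · omega
  · have h1 : epsF f (k + 1) = 1 := by omega
    have := fpos_of_odd hA h0 hsum hNe (epsF_odd f (k + 1) h1)
    omega

lemma Sp_ec (hA : Antitone f) (h0 : ∀ i, N ≤ i → f i = 0) (hsum : Sp f N = N)
    (hNe : Even N) : ∀ k, Sp (ec f) k = Tc f k := by
  intro k
  induction k with
  | zero =>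
    have h1 : Tc f 0 = 0 := by
      unfold Tc
      rw [Sp_zero]
      omega
    rw [Sp_zero, h1]
  | succ k ih =>
    rw [Sp_succ, ih]
    unfold ec
    have := Tc_mono hA h0 hsum hNe k
    omega

/-- the key concavity inequality -/
lemma eps_key (hA : Antitone f) (h0 : ∀ i, N ≤ i → f i = 0) (hsum : Sp f N = N)
    (hNe : Even N) (k : ℕ) :
    f (k + 1) + 2 * epsF f (k + 1) ≤ f k + epsF f k + epsF f (k + 2) := by
  have hmono : f (k + 1) ≤ f k := hA (Nat.le_succ k)
  rcases Nat.eq_zero_or_pos (epsF f (k + 1)) with h | h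
  · omega
  · have h1 : epsF f (k + 1) = 1 := by have := epsF_le_one f (k + 1); omega
    obtain ⟨hoddS, hdisj⟩ := (epsF_one_iff' f k).mp h1
    have e1 := Sp_succ f k
    have e2 := Sp_succ f (k + 1)
    by_cases heq : f k = f (k + 1)
    · -- mid-block case: f k = f (k+1) must be even, both neighbors get eps = 1
      have hev : Even (f (k + 1)) := by
        rcases hdisj with hne | hev
        · exact absurd heq hne
        · exact hev
      have hek : epsF f k = 1 := by
        rw [epsF_one_iff]
        constructor
        · rw [Nat.odd_iff] at hoddS ⊢
          rw [Nat.even_iff] at hev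
          omega
        · right
          rw [heq]; exact hev
      have hek2 : epsF f (k + 2) = 1 := by
        rw [show k + 2 = (k + 1) + 1 from rfl, epsF_one_iff']
        constructor
        · rw [Nat.odd_iff] at hoddS ⊢
          rw [Nat.even_iff] at hev
          omega
        · by_cases heq2 : f (k + 1) = f (k + 2)
          · right; rw [← heq2]; exact hev
          · left; exact heq2
      omega
    · -- corner case
      have hlt : f (k + 1) < f k := lt_of_le_of_ne hmono (fun e => heq e.symm)
      by_cases hgap : f (k + 1) + 2 ≤ f k
      · have := epsF_le_one f k; have := epsF_le_one f (k + 2); omega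
      · have hfk : f k = f (k + 1) + 1 := by omega
        by_cases hodd1 : Odd (f (k + 1))
        · -- f k even, so Sp f k odd, eps at k fires
          have hek : epsF f k = 1 := by
            rw [epsF_one_iff]
            constructor
            · rw [Nat.odd_iff] at hoddS hodd1 ⊢
              omega
            · right
              rw [Nat.even_iff]
              rw [Nat.odd_iff] at hodd1
              omega
          omega
        · -- f (k+1) even, eps at k+2 fires
          have hev1 : Even (f (k + 1)) := Nat.not_odd_iff_even.mp hodd1
          have hek2 : epsF f (k + 2) = 1 := by
            rw [show k + 2 = (k + 1) + 1 from rfl, epsF_one_iff']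
            constructor
            · rw [Nat.odd_iff] at hoddS ⊢
              rw [Nat.even_iff] at hev1
              omega
            · by_cases heq2 : f (k + 1) = f (k + 2)
              · right; rw [← heq2]; exact hev1
              · left; exact heq2
          omega

lemma ec_antitone_succ (hA : Antitone f) (h0 : ∀ i, N ≤ i → f i = 0) (hsum : Sp f N = N)
    (hNe : Even N) (k : ℕ) : ec f (k + 1) ≤ ec f k := by
  have key := eps_key hA h0 hsum hNe k
  have m1 := Tc_mono hA h0 hsum hNe k
  have m2 := Tc_mono hA h0 hsum hNe (k + 1)
  have a1 := Tc_add f k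
  have a2 := Tc_add f (k + 1)
  have a3 := Tc_add f (k + 2)
  have s1 := Sp_succ f k
  have s2 := Sp_succ f (k + 1)
  have e0 : Tc f (k + 1 + 1) = Tc f (k + 2) := by norm_num
  have e1 : Sp f (k + 1 + 1) = Sp f (k + 2) := by norm_num
  unfold ec
  omega

lemma ec_corner (hA : Antitone f) (h0 : ∀ i, N ≤ i → f i = 0) (hsum : Sp f N = N)
    (hNe : Even N) (i : ℕ) (hodd : Odd (Sp (ec f) (i + 1))) : ec f i = ec f (i + 1) := by
  rw [Sp_ec hA h0 hsum hNe] at hodd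
  have heps : epsF f (i + 1) = 0 := by
    rcases Nat.eq_zero_or_pos (epsF f (i + 1)) with h | h
    · exact h
    · exfalso
      have h1 : epsF f (i + 1) = 1 := by have := epsF_le_one f (i + 1); omega
      have hS := epsF_odd f (i + 1) h1
      have := Tc_add f (i + 1)
      rw [Nat.odd_iff] at hodd hS
      omega
  have hTS : Tc f (i + 1) = Sp f (i + 1) := by
    have := Tc_add f (i + 1); omega
  rw [hTS] at hodd
  -- epsF = 0 with odd sum forces mid-block odd part
  have hne := (epsF_one_iff' f i).not.mp (by omega)
  push_neg at hne
  obtain ⟨heq, hnev⟩ := hne hodd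
  have hoddf : Odd (f (i + 1)) := Nat.not_even_iff_odd.mp hnev
  have heps2 : epsF f (i + 2) = 0 := by
    apply epsF_zero_of_even
    rw [show i + 2 = (i + 1) + 1 from rfl, Sp_succ]
    rw [Nat.even_iff]
    rw [Nat.odd_iff] at hodd hoddf
    omega
  have heps0 : epsF f i = 0 := by
    apply epsF_zero_of_even
    have hs := Sp_succ f i
    rw [Nat.even_iff]
    rw [Nat.odd_iff] at hodd hoddf
    rw [← heq] at hoddf
    omega
  have a0 := Tc_add f i
  have a1 := Tc_add f (i + 1)
  have a2 := Tc_add f (i + 2)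
  have s0 := Sp_succ f i
  have s1 := Sp_succ f (i + 1)
  have e0 : Tc f (i + 1 + 1) = Tc f (i + 2) := by norm_num
  have e1 : Sp f (i + 1 + 1) = Sp f (i + 2) := by norm_num
  unfold ec
  omega

end Main

section Main2

variable {N : ℕ} {f : ℕ → ℕ}

lemma ec_zero (hA : Antitone f) (h0 : ∀ i, N ≤ i → f i = 0) (hsum : Sp f N = N)
    (hNe : Even N) : ∀ i, N ≤ i → ec f i = 0 := by
  intro i hi
  have s1 : Sp f i = N := Sp_stableN hA h0 hsum i hi
  have s2 : Sp f (i + 1) = N := Sp_stableN hA h0 hsum (i + 1) (by omega)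
  have e1 : epsF f i = 0 := epsF_zero_of_even f i (by rw [s1]; exact hNe)
  have e2 : epsF f (i + 1) = 0 := epsF_zero_of_even f (i + 1) (by rw [s2]; exact hNe)
  have a1 := Tc_add f i
  have a2 := Tc_add f (i + 1)
  unfold ec
  omega

lemma ec_antitone (hA : Antitone f) (h0 : ∀ i, N ≤ i → f i = 0) (hsum : Sp f N = N)
    (hNe : Even N) : Antitone (ec f) :=
  antitone_nat_of_succ_le (fun k => ec_antitone_succ hA h0 hsum hNe k)

lemma ec_sumN (hA : Antitone f) (h0 : ∀ i, N ≤ i → f i = 0) (hsum : Sp f N = N)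
    (hNe : Even N) : Sp (ec f) N = N := by
  rw [Sp_ec hA h0 hsum hNe]
  have e1 : epsF f N = 0 := epsF_zero_of_even f N (by rw [hsum]; exact hNe)
  have a1 := Tc_add f N
  omega

lemma ec_dom (hA : Antitone f) (h0 : ∀ i, N ≤ i → f i = 0) (hsum : Sp f N = N)
    (hNe : Even N) : ∀ k, Sp (ec f) k ≤ Sp f k := by
  intro k
  rw [Sp_ec hA h0 hsum hNe]
  have := Tc_add f k
  omega

/-- maximality: any admissible partition dominated by f is dominated by the collapse -/
lemma ec_max (hA : Antitone f) (h0 : ∀ i, N ≤ i → f i = 0) (hsum : Sp f N = N)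
    (hNe : Even N) {h : ℕ → ℕ}
    (hcorner : ∀ j, Odd (Sp h (j + 1)) → h j = h (j + 1))
    (hdom : ∀ k, Sp h k ≤ Sp f k) :
    ∀ k, Sp h k ≤ Tc f k := by
  intro k
  by_contra hlt
  push_neg at hlt
  have hd := hdom k
  have a1 := Tc_add f k
  have hle1 := epsF_le_one f k
  have heps : epsF f k = 1 := by omega
  have hSh : Sp h k = Sp f k := by omega
  have hOdd : Odd (Sp f k) := epsF_odd f k heps
  -- propagate the violation forever
  have hP : ∀ j, k ≤ j → (Sp h j = Sp f j ∧ Odd (Sp f j) ∧ epsF f j = 1) := by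
    intro j hj
    induction j, hj using Nat.le_induction with
    | base => exact ⟨hSh, hOdd, heps⟩
    | succ j hj ih =>
      obtain ⟨ih1, ih2, ih3⟩ := ih
      have hj1 : 1 ≤ j := by
        by_contra hc
        push_neg at hc
        interval_cases j
        · rw [Sp_zero] at ih2
          simp [Nat.odd_iff] at ih2
      obtain ⟨i, rfl⟩ : ∃ i, j = i + 1 := ⟨j - 1, by omega⟩
      have hcor : h i = h (i + 1) := hcorner i (by rw [ih1]; exact ih2)
      have e1 : Sp h (i + 2) = Sp h (i + 1) + h (i + 1) := by
        rw [show i + 2 = (i + 1) + 1 from rfl, Sp_succ]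
      have e2 : Sp f (i + 2) = Sp f (i + 1) + f (i + 1) := by
        rw [show i + 2 = (i + 1) + 1 from rfl, Sp_succ]
      have e3 : Sp h (i + 1) = Sp h i + h i := Sp_succ h i
      have e4 : Sp f (i + 1) = Sp f i + f i := Sp_succ f i
      have d1 : Sp h (i + 2) ≤ Sp f (i + 2) := hdom (i + 2)
      have d2 : Sp h i ≤ Sp f i := hdom i
      have hfmono : f (i + 1) ≤ f i := hA (Nat.le_succ i)
      have n1 : Sp h (i + 1 + 1) = Sp h (i + 2) := by norm_num
      have n2 : Sp f (i + 1 + 1) = Sp f (i + 2) := by norm_num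
      -- h's constant part equals f's parts around the corner
      have hceq : h (i + 1) = f (i + 1) ∧ f i = f (i + 1) := by
        constructor <;> omega
      have hev : Even (f (i + 1)) := by
        obtain ⟨-, hdisj⟩ := (epsF_one_iff' f i).mp ih3
        rcases hdisj with hne | hev
        · exact absurd hceq.2 hne
        · exact hev
      have hodd2 : Odd (Sp f (i + 2)) := by
        rw [e2, Nat.odd_iff] at *
        rw [Nat.even_iff] at hev
        omega
      have n4 : f (i + 1 + 1) = f (i + 2) := by norm_num
      refine ⟨by omega, by rw [n2]; exact hodd2, ?_⟩
      rw [epsF_one_iff']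
      refine ⟨by rw [n2]; exact hodd2, ?_⟩
      by_cases heq2 : f (i + 1) = f (i + 2)
      · right; rw [n4, ← heq2]; exact hev
      · left; rw [n4]; exact heq2
  obtain ⟨-, hOddN, -⟩ := hP (k + N) (by omega)
  have hval : Sp f (k + N) = N := Sp_stableN hA h0 hsum _ (by omega)
  rw [hval, Nat.odd_iff] at hOddN
  rw [Nat.even_iff] at hNe
  omega

end Main2


/-- number of indices carrying an odd value `> c` is even, for an admissible partition -/
lemma even_card_level {N : ℕ} {h : ℕ → ℕ} (hA : Antitone h)
    (hop : OddPartsEvenMult N h) :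
    ∀ k c, h 0 ≤ c + k → Even (((Finset.range N).filter (fun i => Odd (h i) ∧ c < h i)).card) := by
  intro k
  induction k with
  | zero =>
    intro c hc
    have : ((Finset.range N).filter (fun i => Odd (h i) ∧ c < h i)) = ∅ := by
      apply Finset.filter_false_of_mem
      intro i _
      have : h i ≤ h 0 := hA (Nat.zero_le i)
      rintro ⟨-, hlt⟩
      omega
    simp [this]
  | succ k ih =>
    intro c hc
    by_cases hck : h 0 ≤ c + k
    · exact ih c hck
    · have hspl : (Finset.range N).filter (fun i => Odd (h i) ∧ c < h i)
          = ((Finset.range N).filter (fun i => (Odd (h i) ∧ c + 1 < h i)))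
            ∪ ((Finset.range N).filter (fun i => h i = c + 1 ∧ Odd (c + 1))) := by
        rw [← Finset.filter_or]
        apply Finset.filter_congr
        intro i _
        simp only [Nat.odd_iff]
        constructor
        · rintro ⟨h1, h2⟩; omega
        · rintro (⟨h1, h2⟩ | ⟨h1, h2⟩) <;> omega
      rw [hspl, Finset.card_union_of_disjoint]
      · apply Even.add
        · exact ih (c + 1) (by omega)
        · by_cases hodd : Odd (c + 1)
          · have : (Finset.range N).filter (fun i => h i = c + 1 ∧ Odd (c + 1))
                = (Finset.range N).filter (fun i => h i = c + 1) := by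
              apply Finset.filter_congr
              intro i _
              simp [hodd]
            rw [this]
            exact hop (c + 1) hodd
          · have : (Finset.range N).filter (fun i => h i = c + 1 ∧ Odd (c + 1)) = ∅ := by
              apply Finset.filter_false_of_mem
              intro i _
              rintro ⟨-, hodd'⟩
              exact hodd hodd'
            simp [this]
      · rw [Finset.disjoint_filter]
        rintro x _ ⟨-, h1⟩ ⟨h2, -⟩
        omega

/-- admissible ⟹ no corner at odd partial sums -/
lemma corner_of_opem {N : ℕ} {h : ℕ → ℕ} (hA : Antitone h) (h0 : ∀ i, N ≤ i → h i = 0)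
    (hop : OddPartsEvenMult N h) :
    ∀ j, Odd (Sp h (j + 1)) → h j = h (j + 1) := by
  intro j hoddS
  by_contra hne
  have hlt : h (j + 1) < h j := lt_of_le_of_ne (hA (Nat.le_succ j)) (fun e => hne e.symm)
  have hjN : j < N := by
    by_contra hge
    push_neg at hge
    have h1 : h j = 0 := h0 j hge
    have h2 : h (j + 1) = 0 := h0 (j + 1) (by omega)
    omega
  have hfe : (Finset.range (j + 1)).filter (fun i => Odd (h i))
      = (Finset.range N).filter (fun i => Odd (h i) ∧ h (j + 1) < h i) := by
    ext i
    simp only [Finset.mem_filter, Finset.mem_range]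
    constructor
    · rintro ⟨hij, hodd⟩
      have : h j ≤ h i := hA (by omega)
      exact ⟨by omega, hodd, by omega⟩
    · rintro ⟨hiN, hodd, hgt⟩
      refine ⟨?_, hodd⟩
      by_contra hge
      push_neg at hge
      have : h i ≤ h (j + 1) := hA hge
      omega
  have heven : Even (Sp h (j + 1)) := by
    rw [Sp, Finset.even_sum_iff_even_card_odd, hfe]
    exact even_card_level hA hop (h 0) (h (j + 1)) (by omega)
  exact (Nat.not_even_iff_odd.mpr hoddS) heven

/-- no corner at odd partial sums ⟹ admissible -/
lemma opem_of_corner {N : ℕ} {h : ℕ → ℕ} (hA : Antitone h) (h0 : ∀ i, N ≤ i → h i = 0)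
    (hc : ∀ j, Odd (Sp h (j + 1)) → h j = h (j + 1)) : OddPartsEvenMult N h := by
  intro m hm
  have hm1 : 1 ≤ m := hm.pos
  have hNm : h N = 0 := h0 N le_rfl
  have hne1 : {i | h i ≤ m}.Nonempty := ⟨N, by simp; omega⟩
  have hne2 : {i | h i < m}.Nonempty := ⟨N, by simp; omega⟩
  set a := sInf {i | h i ≤ m} with ha_def
  set b := sInf {i | h i < m} with hb_def
  have ha : h a ≤ m := Nat.sInf_mem hne1
  have hb : h b < m := Nat.sInf_mem hne2
  have halt : ∀ x, x < a → m < h x := by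
    intro x hx
    have := Nat.notMem_of_lt_sInf hx
    simp only [Set.mem_setOf_eq] at this
    omega
  have hblt : ∀ x, x < b → m ≤ h x := by
    intro x hx
    have := Nat.notMem_of_lt_sInf hx
    simp only [Set.mem_setOf_eq] at this
    omega
  have hab : a ≤ b := Nat.sInf_le (by simp only [Set.mem_setOf_eq]; omega)
  have hbN : b ≤ N := Nat.sInf_le (by simp only [Set.mem_setOf_eq]; omega)
  have hfilter : (Finset.range N).filter (fun i => h i = m) = Finset.Ico a b := by
    ext x
    simp only [Finset.mem_filter, Finset.mem_range, Finset.mem_Ico]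
    constructor
    · rintro ⟨hxN, hxm⟩
      constructor
      · by_contra hxa
        push_neg at hxa
        have := halt x hxa
        omega
      · by_contra hxb
        push_neg at hxb
        have : h x ≤ h b := hA hxb
        omega
    · rintro ⟨hax, hxb⟩
      have h1 : h x ≤ h a := hA hax
      have h2 : m ≤ h x := hblt x hxb
      exact ⟨by omega, by omega⟩
  rw [hfilter, Nat.card_Ico]
  rcases eq_or_lt_of_le hab with heq | hlt
  · simp [heq]
  · have ham : h a = m := le_antisymm ha (hblt a hlt)
    clear_value a b
    have hEa : Even (Sp h a) := by
      rcases Nat.eq_zero_or_pos a with h0a | h0a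
      · subst h0a; simp [Sp]
      · obtain ⟨a', rfl⟩ : ∃ a', a = a' + 1 := ⟨a - 1, by omega⟩
        rw [Nat.not_odd_iff_even.symm]
        intro hodd
        have h1 := hc a' hodd
        have h2 := halt a' (Nat.lt_succ_self a')
        omega
    obtain ⟨b', rfl⟩ : ∃ b', b = b' + 1 := ⟨b - 1, by omega⟩
    have hmb' : h b' = m := by
      have h1 : m ≤ h b' := hblt b' (Nat.lt_succ_self b')
      have h2 : h b' ≤ h a := hA (by omega)
      omega
    have hEb : Even (Sp h (b' + 1)) := by
      rw [Nat.not_odd_iff_even.symm]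
      intro hodd
      have := hc b' hodd
      omega
    have hsum : Sp h (b' + 1) = Sp h a + (b' + 1 - a) * m := by
      have hsplit := Finset.sum_range_add_sum_Ico h (m := a) (n := b' + 1) (by omega)
      have hconst : ∑ i ∈ Finset.Ico a (b' + 1), h i = (b' + 1 - a) * m := by
        rw [Finset.sum_congr rfl (fun x hx => ?_), Finset.sum_const, Nat.card_Ico, smul_eq_mul]
        have hx' := Finset.mem_Ico.mp hx
        have h1 : h x ≤ h a := hA hx'.1
        have h2 : m ≤ h x := hblt x hx'.2
        omega
      rw [Sp, Sp, ← hsplit, hconst]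
    have hEprod : Even ((b' + 1 - a) * m) := by
      rw [Nat.even_iff] at hEa hEb ⊢
      omega
    rcases Nat.even_mul.mp hEprod with he | he
    · exact he
    · rw [Nat.odd_iff] at hm
      rw [Nat.even_iff] at he
      omega



/-- existence and uniqueness of the C-collapse. For every partition `λ` of
`2n`, the set `{μ ∈ P_{-1}(2n) : μ ≤_dom λ}` has a (unique) greatest element. -/
theorem exists_unique_C_collapse (n : ℕ) (f : ℕ → ℕ) (hf : IsPartitionOf (2 * n) f) :
    ∃! g : ℕ → ℕ,
      (IsPartitionOf (2 * n) g ∧ OddPartsEvenMult (2 * n) g ∧ DomLE g f) ∧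
      ∀ h : ℕ → ℕ,
        (IsPartitionOf (2 * n) h ∧ OddPartsEvenMult (2 * n) h ∧ DomLE h f) →
        DomLE h g := by
  obtain ⟨hA, h0, hsum'⟩ := hf
  have hsum : Sp f (2 * n) = 2 * n := hsum'
  have hNe : Even (2 * n) := even_two_mul n
  have gA : Antitone (ec f) := ec_antitone hA h0 hsum hNe
  have g0 : ∀ i, 2 * n ≤ i → ec f i = 0 := ec_zero hA h0 hsum hNe
  have gsum : Sp (ec f) (2 * n) = 2 * n := ec_sumN hA h0 hsum hNe
  have gpart : IsPartitionOf (2 * n) (ec f) := ⟨gA, g0, gsum⟩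
  have gop : OddPartsEvenMult (2 * n) (ec f) :=
    opem_of_corner gA g0 (fun j => ec_corner hA h0 hsum hNe j)
  have gdom : DomLE (ec f) f := ec_dom hA h0 hsum hNe
  have gmax : ∀ h : ℕ → ℕ,
      (IsPartitionOf (2 * n) h ∧ OddPartsEvenMult (2 * n) h ∧ DomLE h f) →
      DomLE h (ec f) := by
    rintro h ⟨⟨hhA, hh0, hhsum⟩, hhop, hhdom⟩
    intro k
    have hmax := ec_max hA h0 hsum hNe (corner_of_opem hhA hh0 hhop) hhdom k
    show Sp h k ≤ Sp (ec f) k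
    rw [Sp_ec hA h0 hsum hNe]
    exact hmax
  refine ⟨ec f, ⟨⟨gpart, gop, gdom⟩, gmax⟩, ?_⟩
  rintro g' ⟨hg'props, hg'max⟩
  have d1 : DomLE g' (ec f) := gmax g' hg'props
  have d2 : DomLE (ec f) g' := hg'max (ec f) ⟨gpart, gop, gdom⟩
  funext i
  have e1 : Sp g' (i + 1) ≤ Sp (ec f) (i + 1) := d1 (i + 1)
  have e2 : Sp (ec f) (i + 1) ≤ Sp g' (i + 1) := d2 (i + 1)
  have e3 : Sp g' i ≤ Sp (ec f) i := d1 i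
  have e4 : Sp (ec f) i ≤ Sp g' i := d2 i
  have s1 := Sp_succ g' i
  have s2 := Sp_succ (ec f) i
  omega
end

section
/- Let k ≥ 1, n = k(k+1), and λ = (k^{k+1}) the rectangular partition with k+1 parts all equal to k. Suppose (α, β) is a bipartition of n (|α| + |β| = n) such that: α has k+1 parts α_0 ≤ α_1 ≤ ... ≤ α_k (zeros allowed), β has k parts β_0 ≤ β_1 ≤ ... ≤ β_{k-1} (zeros allowed), and the multiset {α_i + i : 0 ≤ i ≤ k} ∪ {β_j + j : 0 ≤ j ≤ k-1} equals the set {0, 1, ..., 2k}. Then the Littlewood–Richardson coefficient N^{λ}_{α, βᵗ} is strictly positive. -/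
/-- `(i, j)` is a cell of the skew shape `lam / mu` (partitions as weakly decreasing
functions `ℕ → ℕ`, 0-indexed rows and columns). -/
def SkewCell (lam mu : ℕ → ℕ) (c : ℕ × ℕ) : Prop :=
  mu c.1 ≤ c.2 ∧ c.2 < lam c.1

/-- `T` is a Littlewood–Richardson skew tableau of shape `lam / mu` and content `nu`:
rows weakly increase, columns strictly increase, for each value `v` exactly `nu v` cells
carry the entry `v`, and the reverse reading word (right-to-left, top-to-bottom) is a
lattice word: in every initial segment, the value `v+1` occurs at most as often as `v`.
All cells lie in the box `[0,B) × [0,B)`. The number of such `T` is the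
Littlewood–Richardson coefficient `N^{lam}_{mu, nu}`, so its positivity is equivalent to
the existence of such a `T`. -/
def IsLRTableau (B : ℕ) (lam mu nu : ℕ → ℕ) (T : ℕ → ℕ → ℕ) : Prop :=
  (∀ i j, SkewCell lam mu (i, j) → SkewCell lam mu (i, j + 1) → T i j ≤ T i (j + 1)) ∧
  (∀ i j, SkewCell lam mu (i, j) → SkewCell lam mu (i + 1, j) → T i j < T (i + 1) j) ∧
  (∀ v, (((Finset.range B ×ˢ Finset.range B).filter
      (fun c => mu c.1 ≤ c.2 ∧ c.2 < lam c.1 ∧ T c.1 c.2 = v)).card = nu v)) ∧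
  (∀ i j v,
    ((Finset.range B ×ˢ Finset.range B).filter
      (fun c => (c.1 < i ∨ (c.1 = i ∧ j ≤ c.2)) ∧ mu c.1 ≤ c.2 ∧ c.2 < lam c.1 ∧
        T c.1 c.2 = v + 1)).card ≤
    ((Finset.range B ×ˢ Finset.range B).filter
      (fun c => (c.1 < i ∨ (c.1 = i ∧ j ≤ c.2)) ∧ mu c.1 ≤ c.2 ∧ c.2 < lam c.1 ∧
        T c.1 c.2 = v)).card)

/-- `lrM k α j` = number of indices `i ∈ [0,k]` with `α i > j`: the conjugate of `α`. -/
def lrM (k : ℕ) (α : ℕ → ℕ) (j : ℕ) : ℕ :=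
  ((Finset.range (k+1)).filter (fun i => j < α i)).card


/-- Let `k ≥ 1`, `n = k(k+1)`, and `λ = (k^{k+1})` the rectangle with `k+1`
parts equal to `k`. Let `(α, β)` be a bipartition of `n` with `α` given by `k+1` weakly
increasing parts `α_0 ≤ ... ≤ α_k` and `β` by `k` weakly increasing parts
`β_0 ≤ ... ≤ β_{k-1}` (zeros allowed), such that the shifted entries
`{α_i + i : 0 ≤ i ≤ k} ∪ {β_j + j : 0 ≤ j ≤ k-1}` are pairwise distinct and exhaust
`{0, 1, ..., 2k}`. Then the Littlewood–Richardson coefficient `N^{λ}_{α, βᵗ}` is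
positive, i.e. there is an LR skew tableau of shape `λ/α` and content `βᵗ`
(with `α` rewritten in weakly decreasing order). -/
theorem LR_positive_typeC (k : ℕ) (hk : 1 ≤ k) (α β : ℕ → ℕ)
    (hαmono : ∀ i j, i ≤ j → j ≤ k → α i ≤ α j)
    (hβmono : ∀ i j, i ≤ j → j < k → β i ≤ β j)
    (hsum : (∑ i ∈ Finset.range (k + 1), α i) + (∑ j ∈ Finset.range k, β j) = k * (k + 1))
    (hcross : ∀ i ≤ k, ∀ j < k, α i + i ≠ β j + j)
    (hbddα : ∀ i ≤ k, α i + i ≤ 2 * k)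
    (hbddβ : ∀ j < k, β j + j ≤ 2 * k)
    (hcover : ∀ m ≤ 2 * k, (∃ i ≤ k, α i + i = m) ∨ (∃ j < k, β j + j = m)) :
    ∃ T : ℕ → ℕ → ℕ,
      IsLRTableau (k * (k + 1) + 1)
        (fun i => if i ≤ k then k else 0)
        (fun i => if i ≤ k then α (k - i) else 0)
        (conjMap k (fun j => if j < k then β (k - 1 - j) else 0))
        T := by
  classical
  set B := k * (k + 1) + 1 with hB
  have hkB : k < B := by nlinarith
  -- strict monotonicity of shifted sequences
  have hfmono : ∀ i i' : ℕ, i < i' → i' ≤ k → α i + i < α i' + i' := by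
    intro i i' h h'
    have := hαmono i i' h.le h'
    omega
  have hgmono : ∀ j j' : ℕ, j < j' → j' < k → β j + j < β j' + j' := by
    intro j j' h h'
    have := hβmono j j' h.le h'
    omega
  -- counting lemma: below any M ≤ 2k, the shifted α's and β's fill {0,…,M}
  have key : ∀ M, M ≤ 2*k →
      ((Finset.range (k+1)).filter (fun i => α i + i ≤ M)).card
      + ((Finset.range k).filter (fun j => β j + j ≤ M)).card = M + 1 := by
    intro M hM
    have himg : (((Finset.range (k+1)).filter (fun i => α i + i ≤ M)).image (fun i => α i + i))
        ∪ (((Finset.range k).filter (fun j => β j + j ≤ M)).image (fun j => β j + j))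
        = Finset.range (M+1) := by
      ext x
      simp only [Finset.mem_union, Finset.mem_image, Finset.mem_filter, Finset.mem_range]
      constructor
      · rintro (⟨i, ⟨hi, hle⟩, rfl⟩ | ⟨j, ⟨hj, hle⟩, rfl⟩) <;> omega
      · intro hx
        rcases hcover x (by omega) with ⟨i, hik, hie⟩ | ⟨j, hjk, hje⟩
        · exact Or.inl ⟨i, ⟨by omega, by omega⟩, hie⟩
        · exact Or.inr ⟨j, ⟨by omega, by omega⟩, hje⟩
    have hdisj : Disjoint
        (((Finset.range (k+1)).filter (fun i => α i + i ≤ M)).image (fun i => α i + i))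
        (((Finset.range k).filter (fun j => β j + j ≤ M)).image (fun j => β j + j)) := by
      rw [Finset.disjoint_left]
      intro x hxA hxB
      simp only [Finset.mem_image, Finset.mem_filter, Finset.mem_range] at hxA hxB
      obtain ⟨i, ⟨hi, _⟩, rfl⟩ := hxA
      obtain ⟨j, ⟨hj, _⟩, hje⟩ := hxB
      exact hcross i (by omega) j hj hje.symm
    have hinjA : Set.InjOn (fun i => α i + i)
        ((Finset.range (k+1)).filter (fun i => α i + i ≤ M)) := by
      intro a ha b hb hab
      simp only [Finset.coe_filter, Set.mem_setOf_eq, Finset.mem_range] at ha hb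
      have hab' : α a + a = α b + b := hab
      rcases lt_trichotomy a b with h | h | h
      · have := hfmono a b h (by omega); omega
      · exact h
      · have := hfmono b a h (by omega); omega
    have hinjB : Set.InjOn (fun j => β j + j)
        ((Finset.range k).filter (fun j => β j + j ≤ M)) := by
      intro a ha b hb hab
      simp only [Finset.coe_filter, Set.mem_setOf_eq, Finset.mem_range] at ha hb
      have hab' : β a + a = β b + b := hab
      rcases lt_trichotomy a b with h | h | h
      · have := hgmono a b h hb.1; omega
      · exact h
      · have := hgmono b a h ha.1; omega
    have := congrArg Finset.card himg
    rwa [Finset.card_union_of_disjoint hdisj, Finset.card_image_of_injOn hinjA,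
      Finset.card_image_of_injOn hinjB, Finset.card_range] at this
  -- the α-filter below α v + v has card v+1
  have hAcard : ∀ v, v ≤ k →
      ((Finset.range (k+1)).filter (fun i => α i + i ≤ α v + v)).card = v + 1 := by
    intro v hv
    have : ((Finset.range (k+1)).filter (fun i => α i + i ≤ α v + v)) = Finset.range (v+1) := by
      ext i
      simp only [Finset.mem_filter, Finset.mem_range]
      constructor
      · rintro ⟨hi, hle⟩
        by_contra h
        have := hfmono v i (by omega) (by omega)
        omega
      · intro hi
        have := hαmono i v (by omega) hv
        exact ⟨by omega, by omega⟩
    rw [this, Finset.card_range]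
  have hBcard : ∀ j, j < k →
      ((Finset.range k).filter (fun j' => β j' + j' ≤ β j + j)).card = j + 1 := by
    intro j hj
    have : ((Finset.range k).filter (fun j' => β j' + j' ≤ β j + j)) = Finset.range (j+1) := by
      ext j'
      simp only [Finset.mem_filter, Finset.mem_range]
      constructor
      · rintro ⟨hj', hle⟩
        by_contra h
        have := hgmono j j' (by omega) hj'
        omega
      · intro hj'
        have := hβmono j' j (by omega) hj
        exact ⟨by omega, by omega⟩
    rw [this, Finset.card_range]
  -- β j equals the number of α-positions below β j + j
  have hβval : ∀ j, j < k →
      ((Finset.range (k+1)).filter (fun i => α i + i ≤ β j + j)).card = β j := by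
    intro j hj
    have h1 := key (β j + j) (hbddβ j hj)
    rw [hBcard j hj] at h1
    omega
  -- α v equals the number of β-positions below α v + v
  have hαval : ∀ v, v ≤ k →
      ((Finset.range k).filter (fun j => β j + j ≤ α v + v)).card = α v := by
    intro v hv
    have h1 := key (α v + v) (hbddα v hv)
    rw [hAcard v hv] at h1
    omega
  -- β is bounded by k+1
  have hβub : ∀ j, j < k → β j ≤ k + 1 := by
    intro j hj
    rw [← hβval j hj]
    calc ((Finset.range (k+1)).filter (fun i => α i + i ≤ β j + j)).card
        ≤ (Finset.range (k+1)).card := Finset.card_filter_le _ _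
      _ = k + 1 := Finset.card_range _
  -- key comparison: β j ≤ v ↔ β j + j ≤ α v + v  (for v ≤ k, j < k)
  have hβiff : ∀ v, v ≤ k → ∀ j, j < k → (β j ≤ v ↔ β j + j ≤ α v + v) := by
    intro v hv j hj
    constructor
    · intro h
      by_contra hlt
      push_neg at hlt
      have hsub : Finset.range (v+1) ⊆
          (Finset.range (k+1)).filter (fun i => α i + i ≤ β j + j) := by
        intro i hi
        simp only [Finset.mem_range] at hi
        simp only [Finset.mem_filter, Finset.mem_range]
        have := hαmono i v (by omega) hv
        exact ⟨by omega, by omega⟩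
      have := Finset.card_le_card hsub
      rw [hβval j hj, Finset.card_range] at this
      omega
    · intro h
      have hne := hcross v hv j hj
      have hsub : (Finset.range (k+1)).filter (fun i => α i + i ≤ β j + j)
          ⊆ Finset.range v := by
        intro i hi
        simp only [Finset.mem_filter, Finset.mem_range] at hi ⊢
        by_contra h'
        have := hαmono v i (by omega) (by omega)
        omega
      have := Finset.card_le_card hsub
      rw [hβval j hj, Finset.card_range] at this
      exact this
  -- facts about m := lrM k α
  have hm_ub : ∀ i, i ≤ k → ∀ j, α (k - i) ≤ j → lrM k α j ≤ i := by
    intro i hi j hj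
    have hsub : (Finset.range (k+1)).filter (fun i' => j < α i') ⊆ Finset.Ioc (k - i) k := by
      intro i' h
      simp only [Finset.mem_filter, Finset.mem_range] at h
      simp only [Finset.mem_Ioc]
      constructor
      · by_contra h'
        have := hαmono i' (k - i) (by omega) (by omega)
        omega
      · omega
    calc lrM k α j ≤ (Finset.Ioc (k - i) k).card := Finset.card_le_card hsub
      _ = k - (k - i) := Nat.card_Ioc _ _
      _ ≤ i := by omega
  have hm_α : ∀ j, lrM k α j ≤ k → α (k - lrM k α j) ≤ j := by
    intro j hjk
    by_contra h
    push_neg at h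
    have hsub : Finset.Icc (k - lrM k α j) k ⊆
        (Finset.range (k+1)).filter (fun i' => j < α i') := by
      intro i' hi'
      simp only [Finset.mem_Icc] at hi'
      simp only [Finset.mem_filter, Finset.mem_range]
      exact ⟨by omega, lt_of_lt_of_le h (hαmono _ _ hi'.1 hi'.2)⟩
    have hcard := Finset.card_le_card hsub
    rw [Nat.card_Icc] at hcard
    have : lrM k α j = ((Finset.range (k+1)).filter (fun i' => j < α i')).card := rfl
    omega
  have hm1 : ∀ v, v ≤ k → ∀ j, lrM k α j ≤ k - v → α v ≤ j := by
    intro v hv j h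
    have h1 : α (k - lrM k α j) ≤ j := hm_α j (by omega)
    exact le_trans (hαmono v (k - lrM k α j) (by omega) (by omega)) h1
  have hm2 : ∀ v, v ≤ k → ∀ j, α v ≤ j → lrM k α j ≤ k - v := by
    intro v hv j h
    have hsub : (Finset.range (k+1)).filter (fun i' => j < α i') ⊆ Finset.Ioc v k := by
      intro i' hi'
      simp only [Finset.mem_filter, Finset.mem_range] at hi'
      simp only [Finset.mem_Ioc]
      constructor
      · by_contra h'
        have := hαmono i' v (by omega) hv
        omega
      · omega
    calc lrM k α j ≤ (Finset.Ioc v k).card := Finset.card_le_card hsub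
      _ = k - v := Nat.card_Ioc _ _
  have hm_anti : ∀ j j' : ℕ, j ≤ j' → lrM k α j' ≤ lrM k α j := by
    intro j j' h
    apply Finset.card_le_card
    intro i hi
    simp only [Finset.mem_filter, Finset.mem_range] at hi ⊢
    exact ⟨hi.1, by omega⟩
  -- the tableau
  refine ⟨fun i j => i - lrM k α j, ?_, ?_, ?_, ?_⟩
  · -- rows weakly increase
    intro i j h1 h2
    have := hm_anti j (j+1) (by omega)
    exact Nat.sub_le_sub_left this i
  · -- columns strictly increase
    intro i j h1 h2
    obtain ⟨hmu, hlam⟩ := h1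
    simp only at hmu hlam
    have hik : i ≤ k := by by_contra h; rw [if_neg h] at hlam; omega
    rw [if_pos hik] at hmu hlam
    have hm := hm_ub i hik j hmu
    show i - lrM k α j < i + 1 - lrM k α j
    omega
  · -- content
    intro v
    rcases le_or_gt v k with hv | hv
    · -- LHS = k - α v
      have hset : ((Finset.range B ×ˢ Finset.range B).filter
          (fun c => (if c.1 ≤ k then α (k - c.1) else 0) ≤ c.2 ∧
            c.2 < (if c.1 ≤ k then k else 0) ∧ c.1 - lrM k α c.2 = v))
          = (Finset.Ico (α v) k).image (fun j => (v + lrM k α j, j)) := by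
        ext c
        simp only [Finset.mem_filter, Finset.mem_product, Finset.mem_range, Finset.mem_image,
          Finset.mem_Ico]
        constructor
        · rintro ⟨⟨hc1, hc2⟩, hmu, hlam, hT⟩
          have hik : c.1 ≤ k := by by_contra h; rw [if_neg h] at hlam; omega
          rw [if_pos hik] at hmu hlam
          have hmle : lrM k α c.2 ≤ c.1 := hm_ub c.1 hik c.2 hmu
          have hc1v : c.1 = v + lrM k α c.2 := by omega
          refine ⟨c.2, ⟨hm1 v hv c.2 (by omega), hlam⟩, ?_⟩
          exact Prod.ext hc1v.symm rfl
        · rintro ⟨j, ⟨hαj, hjk⟩, rfl⟩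
          have hmj : lrM k α j ≤ k - v := hm2 v hv j hαj
          have hi : v + lrM k α j ≤ k := by omega
          refine ⟨⟨?_, ?_⟩, ?_, ?_, ?_⟩
          · show v + lrM k α j < B; omega
          · show j < B; omega
          · show (if v + lrM k α j ≤ k then α (k - (v + lrM k α j)) else 0) ≤ j
            rw [if_pos hi]
            exact le_trans (hαmono (k - (v + lrM k α j)) (k - lrM k α j) (by omega) (by omega))
              (hm_α j (by omega))
          · show j < (if v + lrM k α j ≤ k then k else 0)
            rw [if_pos hi]; exact hjk
          · show v + lrM k α j - lrM k α j = v; omega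
      rw [hset, Finset.card_image_of_injOn (fun a _ b _ h => by
        simpa using congrArg Prod.snd h), Nat.card_Ico]
      -- RHS: conjMap k β' v = k - α v
      have hβcnt : ((Finset.range k).filter (fun j => β j ≤ v)).card = α v := by
        rw [Finset.filter_congr (fun j hj => by
          simp only [Finset.mem_range] at hj
          exact hβiff v hv j hj)]
        exact hαval v hv
      have hsplit := Finset.card_filter_add_card_filter_not
        (s := Finset.range k) (p := fun j => β j ≤ v)
      rw [Finset.card_range] at hsplit
      have hconj : conjMap k (fun j => if j < k then β (k - 1 - j) else 0) v
          = ((Finset.range k).filter (fun j => ¬ β j ≤ v)).card := by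
        unfold conjMap
        apply Finset.card_bij' (fun j _ => k - 1 - j) (fun j _ => k - 1 - j)
        · intro j hj
          simp only [Finset.mem_filter, Finset.mem_range] at hj ⊢
          rw [if_pos hj.1] at hj
          exact ⟨by omega, by omega⟩
        · intro j hj
          simp only [Finset.mem_filter, Finset.mem_range] at hj ⊢
          refine ⟨by omega, ?_⟩
          rw [if_pos (by omega : k - 1 - j < k)]
          have : k - 1 - (k - 1 - j) = j := by omega
          rw [this]
          omega
        · intro j hj
          simp only [Finset.mem_filter, Finset.mem_range] at hj
          omega
        · intro j hj
          simp only [Finset.mem_filter, Finset.mem_range] at hj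
          omega
      rw [hconj]
      omega
    · -- v > k : both sides are 0
      have hempty : ((Finset.range B ×ˢ Finset.range B).filter
          (fun c => (if c.1 ≤ k then α (k - c.1) else 0) ≤ c.2 ∧
            c.2 < (if c.1 ≤ k then k else 0) ∧ c.1 - lrM k α c.2 = v)) = ∅ := by
        rw [Finset.filter_eq_empty_iff]
        rintro c hc ⟨hmu, hlam, hT⟩
        have hik : c.1 ≤ k := by by_contra h; rw [if_neg h] at hlam; omega
        rw [if_pos hik] at hmu hlam
        omega
      rw [hempty, Finset.card_empty]
      have : ((Finset.range k).filter
          (fun j => v < (if j < k then β (k - 1 - j) else 0))) = ∅ := by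
        rw [Finset.filter_eq_empty_iff]
        intro j hj
        simp only [Finset.mem_range] at hj
        rw [if_pos hj]
        have := hβub (k - 1 - j) (by omega)
        omega
      unfold conjMap
      rw [this, Finset.card_empty]
  · -- lattice word condition
    intro i j v
    apply Finset.card_le_card_of_injOn (fun c => (c.1 - 1, c.2))
    · intro c hc
      simp only [Finset.mem_coe, Finset.mem_filter, Finset.mem_product, Finset.mem_range] at hc ⊢
      obtain ⟨⟨hc1, hc2⟩, hseg, hmu, hlam, hT⟩ := hc
      have hik : c.1 ≤ k := by by_contra h; rw [if_neg h] at hlam; omega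
      rw [if_pos hik] at hmu hlam
      have hmle : lrM k α c.2 ≤ c.1 := hm_ub c.1 hik c.2 hmu
      have hc1v : c.1 = v + 1 + lrM k α c.2 := by omega
      have hik' : c.1 - 1 ≤ k := by omega
      refine ⟨⟨by omega, hc2⟩, ?_, ?_, ?_, by omega⟩
      · left; omega
      · rw [if_pos hik']
        exact le_trans (hαmono (k - (c.1 - 1)) (k - lrM k α c.2) (by omega) (by omega))
          (hm_α c.2 (by omega))
      · rw [if_pos hik']
        exact hlam
    · intro c hc c' hc' h
      simp only [Finset.mem_coe, Finset.mem_filter, Finset.mem_product, Finset.mem_range]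
        at hc hc'
      obtain ⟨-, -, -, hlam, hT⟩ := hc
      obtain ⟨-, -, -, hlam', hT'⟩ := hc'
      have h' : (c.1 - 1, c.2) = (c'.1 - 1, c'.2) := h
      rw [Prod.mk.injEq] at h'
      have hg1 : c.1 ≥ 1 := by omega
      have hg2 : c'.1 ≥ 1 := by omega
      exact Prod.ext (by omega) h'.2
end

section
/- Let k ≥ 1, n = k², and λ = (k^k) the square partition with k parts equal to k. Suppose (α, β) is a bipartition of n such that: α has k parts α_0 ≤ ... ≤ α_{k-1} (zeros allowed), β has k parts β_0 ≤ ... ≤ β_{k-1} (zeros allowed), and the multiset {α_i + i : 0 ≤ i ≤ k-1} ∪ {β_j + j : 0 ≤ j ≤ k-1} equals the set {0, 1, ..., 2k-1}. Then the Littlewood–Richardson coefficient N^{λ}_{α, βᵗ} is strictly positive. -/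
open Finset

namespace LRauxD

/-- A downward-closed finset of naturals is an initial segment. -/
lemma dc_eq_range (S : Finset ℕ) (h : ∀ i j : ℕ, i ≤ j → j ∈ S → i ∈ S) :
    S = Finset.range S.card := by
  have hsub : S ⊆ Finset.range S.card := by
    intro n hn
    have h1 : Finset.range (n + 1) ⊆ S := fun i hi =>
      h i n (Nat.lt_succ_iff.mp (Finset.mem_range.mp hi)) hn
    have h2 := Finset.card_le_card h1
    rw [Finset.card_range] at h2
    exact Finset.mem_range.mpr h2
  exact Finset.eq_of_subset_of_card_le hsub (le_of_eq (Finset.card_range _))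

def muF (k : ℕ) (α : ℕ → ℕ) : ℕ → ℕ := fun i => if i < k then α (k - 1 - i) else 0

def rF (k : ℕ) (α : ℕ → ℕ) (b : ℕ) : ℕ :=
  ((Finset.range k).filter (fun i => b < muF k α i)).card

def TF (k : ℕ) (α : ℕ → ℕ) : ℕ → ℕ → ℕ :=
  fun a b => ((Finset.range a).filter (fun i => muF k α i ≤ b)).card

lemma r_spec (k : ℕ) (α : ℕ → ℕ)
    (hαmono : ∀ i j, i ≤ j → j < k → α i ≤ α j) (b : ℕ) :
    ∀ a, a < k → (muF k α a ≤ b ↔ rF k α b ≤ a) := by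
  have hS : (Finset.range k).filter (fun i => b < muF k α i) = Finset.range (rF k α b) := by
    apply dc_eq_range
    intro i j hij hj
    rw [Finset.mem_filter] at hj ⊢
    obtain ⟨hjk, hbj⟩ := hj
    rw [Finset.mem_range] at hjk
    have hik : i < k := lt_of_le_of_lt hij hjk
    refine ⟨Finset.mem_range.mpr hik, ?_⟩
    have : muF k α j ≤ muF k α i := by
      simp only [muF, if_pos hjk, if_pos hik]
      exact hαmono (k - 1 - j) (k - 1 - i) (by omega) (by omega)
    omega
  intro a ha
  have key : (b < muF k α a) ↔ a < rF k α b := by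
    rw [← Finset.mem_range (n := rF k α b), ← hS, Finset.mem_filter, Finset.mem_range]
    constructor
    · exact fun h => ⟨ha, h⟩
    · exact fun h => h.2
  omega

lemma T_val (k : ℕ) (α : ℕ → ℕ)
    (hαmono : ∀ i j, i ≤ j → j < k → α i ≤ α j) (a b : ℕ)
    (ha : a ≤ k) (hr : rF k α b ≤ a) : TF k α a b = a - rF k α b := by
  unfold TF
  have hset : (Finset.range a).filter (fun i => muF k α i ≤ b) = Finset.Ico (rF k α b) a := by
    ext i
    rw [Finset.mem_filter, Finset.mem_range, Finset.mem_Ico]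
    constructor
    · rintro ⟨hia, hmu⟩
      exact ⟨(r_spec k α hαmono b i (by omega)).mp hmu, hia⟩
    · rintro ⟨hri, hia⟩
      exact ⟨hia, (r_spec k α hαmono b i (by omega)).mpr hri⟩
  rw [hset, Nat.card_Ico]

/-- Key counting lemma: the number of `i < k` with `β i + i < α v + v` equals `α v`. -/
lemma keyL1 (k : ℕ) (α β : ℕ → ℕ)
    (hαmono : ∀ i j, i ≤ j → j < k → α i ≤ α j)
    (hβmono : ∀ i j, i ≤ j → j < k → β i ≤ β j)
    (hcross : ∀ i < k, ∀ j < k, α i + i ≠ β j + j)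
    (hbddα : ∀ i < k, α i + i < 2 * k)
    (hcover : ∀ m < 2 * k, (∃ i < k, α i + i = m) ∨ (∃ j < k, β j + j = m)) :
    ∀ v < k, ((Finset.range k).filter (fun i => β i + i < α v + v)).card = α v := by
  intro v hv
  have hstrict : ∀ i j, i < j → j < k → α i + i < α j + j := by
    intro i j hij hj
    have := hαmono i j (le_of_lt hij) hj
    omega
  have hstrictβ : ∀ i j, i < j → j < k → β i + i < β j + j := by
    intro i j hij hj
    have := hβmono i j (le_of_lt hij) hj
    omega
  set C := α v + v with hC
  set SB := (Finset.range k).filter (fun i => β i + i < C) with hSB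
  have hunion : Finset.range C =
      ((Finset.range v).image (fun j => α j + j)) ∪ (SB.image (fun i => β i + i)) := by
    ext m
    simp only [Finset.mem_range, Finset.mem_union, Finset.mem_image, hSB, Finset.mem_filter]
    constructor
    · intro hm
      have hm2 : m < 2 * k := lt_trans hm (hbddα v hv)
      rcases hcover m hm2 with ⟨j, hj, hje⟩ | ⟨i, hi, hie⟩
      · left
        refine ⟨j, ?_, hje⟩
        by_contra hjv
        push_neg at hjv
        have : C ≤ α j + j := by
          rcases eq_or_lt_of_le hjv with h | h
          · rw [hC, h]
          · exact le_of_lt (hstrict v j h hj)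
        omega
      · right
        exact ⟨i, ⟨hi, by omega⟩, hie⟩
    · rintro (⟨j, hj, rfl⟩ | ⟨i, ⟨hi, hlt⟩, rfl⟩)
      · exact hstrict j v hj hv
      · exact hlt
  have hdisj : Disjoint ((Finset.range v).image (fun j => α j + j))
      (SB.image (fun i => β i + i)) := by
    rw [Finset.disjoint_left]
    intro m hm1 hm2
    obtain ⟨j, hj, rfl⟩ := Finset.mem_image.mp hm1
    obtain ⟨i, hi, he⟩ := Finset.mem_image.mp hm2
    rw [Finset.mem_range] at hj
    have hik : i < k := Finset.mem_range.mp (Finset.mem_filter.mp hi).1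
    exact hcross j (lt_trans hj hv) i hik he.symm
  have hcardA : ((Finset.range v).image (fun j => α j + j)).card = v := by
    rw [Finset.card_image_of_injOn, Finset.card_range]
    intro i hi j hj h
    simp only [Finset.coe_range, Set.mem_Iio] at hi hj
    have h2 : α i + i = α j + j := h
    rcases lt_trichotomy i j with h' | h' | h'
    · have := hstrict i j h' (lt_trans hj hv); omega
    · exact h'
    · have := hstrict j i h' (lt_trans hi hv); omega
  have hcardB : (SB.image (fun i => β i + i)).card = SB.card := by
    apply Finset.card_image_of_injOn
    intro i hi j hj h
    have hik : i < k := Finset.mem_range.mp (Finset.mem_filter.mp (by exact_mod_cast hi)).1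
    have hjk : j < k := Finset.mem_range.mp (Finset.mem_filter.mp (by exact_mod_cast hj)).1
    have h2 : β i + i = β j + j := h
    rcases lt_trichotomy i j with h' | h' | h'
    · have := hstrictβ i j h' hjk; omega
    · exact h'
    · have := hstrictβ j i h' hik; omega
  have hcards := congrArg Finset.card hunion
  rw [Finset.card_range, Finset.card_union_of_disjoint hdisj, hcardA, hcardB] at hcards
  have hSBv : SB.card = C - v := by omega
  omega

/-- `#{i < k : β i ≤ v} = α v` for `v < k`. -/
lemma s_eq (k : ℕ) (α β : ℕ → ℕ)
    (hαmono : ∀ i j, i ≤ j → j < k → α i ≤ α j)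
    (hβmono : ∀ i j, i ≤ j → j < k → β i ≤ β j)
    (hcross : ∀ i < k, ∀ j < k, α i + i ≠ β j + j)
    (hbddα : ∀ i < k, α i + i < 2 * k)
    (hbddβ : ∀ j < k, β j + j < 2 * k)
    (hcover : ∀ m < 2 * k, (∃ i < k, α i + i = m) ∨ (∃ j < k, β j + j = m)) :
    ∀ v < k, ((Finset.range k).filter (fun i => β i ≤ v)).card = α v := by
  intro v hv
  have hcross' : ∀ i < k, ∀ j < k, β i + i ≠ α j + j := fun i hi j hj => (hcross j hj i hi).symm
  have hcover' : ∀ m < 2 * k, (∃ i < k, β i + i = m) ∨ (∃ j < k, α j + j = m) :=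
    fun m hm => (hcover m hm).symm
  have hL2 : ∀ i < k, ((Finset.range k).filter (fun j => α j + j < β i + i)).card = β i :=
    keyL1 k β α hβmono hαmono hcross' hbddβ hcover'
  have hL1 := keyL1 k α β hαmono hβmono hcross hbddα hcover v hv
  have hset : (Finset.range k).filter (fun i => β i + i < α v + v) =
      (Finset.range k).filter (fun i => β i ≤ v) := by
    ext i
    simp only [Finset.mem_filter, Finset.mem_range]
    constructor
    · rintro ⟨hik, hlt⟩
      refine ⟨hik, ?_⟩
      have h2 := hL2 i hik
      have hsub : (Finset.range k).filter (fun j => α j + j < β i + i) ⊆ Finset.range v := by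
        intro j hj
        rw [Finset.mem_filter, Finset.mem_range] at hj
        rw [Finset.mem_range]
        by_contra hjv
        push_neg at hjv
        have : α v + v ≤ α j + j := by
          rcases eq_or_lt_of_le hjv with h | h
          · rw [h]
          · have := hαmono v j (le_of_lt h) hj.1; omega
        omega
      have := Finset.card_le_card hsub
      rw [h2, Finset.card_range] at this
      exact this
    · rintro ⟨hik, hle⟩
      refine ⟨hik, ?_⟩
      rcases lt_trichotomy (β i + i) (α v + v) with h | h | h
      · exact h
      · exact absurd h.symm (hcross v hv i hik)
      · exfalso
        have h2 := hL2 i hik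
        have hsub : Finset.range (v + 1) ⊆
            (Finset.range k).filter (fun j => α j + j < β i + i) := by
          intro j hj
          rw [Finset.mem_range] at hj
          rw [Finset.mem_filter, Finset.mem_range]
          have hjk : j < k := by omega
          have : α j + j ≤ α v + v := by
            rcases Nat.lt_or_ge j v with h' | h'
            · have := hαmono j v (le_of_lt h') hv; omega
            · have : j = v := by omega
              rw [this]
          exact ⟨hjk, by omega⟩
        have := Finset.card_le_card hsub
        rw [h2, Finset.card_range] at this
        omega
  rw [← hset, hL1]

end LRauxD

/-- Let `k ≥ 1`, `n = k²`, and `λ = (k^k)` the square partition with `k`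
parts equal to `k`. Let `(α, β)` be a bipartition of `n` with `α` and `β` each given by
`k` weakly increasing parts (zeros allowed), such that the shifted entries
`{α_i + i : 0 ≤ i ≤ k-1} ∪ {β_j + j : 0 ≤ j ≤ k-1}` are pairwise distinct and exhaust
`{0, 1, ..., 2k-1}`. Then the Littlewood–Richardson coefficient `N^{λ}_{α, βᵗ}` is
positive, i.e. there is an LR skew tableau of shape `λ/α` and content `βᵗ`
(with `α` rewritten in weakly decreasing order). -/
theorem LR_positive_typeD (k : ℕ) (hk : 1 ≤ k) (α β : ℕ → ℕ)
    (hαmono : ∀ i j, i ≤ j → j < k → α i ≤ α j)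
    (hβmono : ∀ i j, i ≤ j → j < k → β i ≤ β j)
    (hsum : (∑ i ∈ Finset.range k, α i) + (∑ j ∈ Finset.range k, β j) = k * k)
    (hcross : ∀ i < k, ∀ j < k, α i + i ≠ β j + j)
    (hbddα : ∀ i < k, α i + i < 2 * k)
    (hbddβ : ∀ j < k, β j + j < 2 * k)
    (hcover : ∀ m < 2 * k, (∃ i < k, α i + i = m) ∨ (∃ j < k, β j + j = m)) :
    ∃ T : ℕ → ℕ → ℕ,
      IsLRTableau (k * k + 1)
        (fun i => if i < k then k else 0)
        (fun i => if i < k then α (k - 1 - i) else 0)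
        (conjMap k (fun j => if j < k then β (k - 1 - j) else 0))
        T := by
  classical
  refine ⟨LRauxD.TF k α, ?_, ?_, ?_, ?_⟩
  -- Part 1: rows weakly increase
  · intro i j _ _
    apply Finset.card_le_card
    intro x hx
    rw [Finset.mem_filter] at hx ⊢
    exact ⟨hx.1, le_trans hx.2 (Nat.le_succ j)⟩
  -- Part 2: columns strictly increase
  · intro i j h1 h2
    obtain ⟨h1a, h1b⟩ := h1
    obtain ⟨h2a, h2b⟩ := h2
    simp only at h1a h1b h2a h2b
    show LRauxD.TF k α i j < LRauxD.TF k α (i + 1) j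
    unfold LRauxD.TF
    rw [Finset.range_add_one, Finset.filter_insert, if_pos (show LRauxD.muF k α i ≤ j from h1a)]
    rw [Finset.card_insert_of_notMem (fun h => by simpa using Finset.mem_of_mem_filter i h)]
    omega
  -- Part 3: content
  · intro v
    have hαle : ∀ i < k, α i ≤ k := by
      intro i hi
      have h1 := hαmono i (k - 1) (by omega) (by omega)
      have h2 := hbddα (k - 1) (by omega)
      omega
    have hβle : ∀ i < k, β i ≤ k := by
      intro i hi
      have h1 := hβmono i (k - 1) (by omega) (by omega)
      have h2 := hbddβ (k - 1) (by omega)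
      omega
    have hkB : k ≤ k * k + 1 := by
      have : k * 1 ≤ k * k := Nat.mul_le_mul_left k hk
      omega
    -- restrict the box to range k × range k
    have hset : ((Finset.range (k * k + 1) ×ˢ Finset.range (k * k + 1)).filter
          (fun c => (if c.1 < k then α (k - 1 - c.1) else 0) ≤ c.2 ∧
            c.2 < (if c.1 < k then k else 0) ∧ LRauxD.TF k α c.1 c.2 = v)) =
        ((Finset.range k ×ˢ Finset.range k).filter
          (fun c => (if c.1 < k then α (k - 1 - c.1) else 0) ≤ c.2 ∧
            c.2 < (if c.1 < k then k else 0) ∧ LRauxD.TF k α c.1 c.2 = v)) := by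
      ext c
      simp only [Finset.mem_filter, Finset.mem_product, Finset.mem_range]
      constructor
      · rintro ⟨⟨hB1, hB2⟩, hmu, hlt, hT⟩
        have hc1 : c.1 < k := by by_contra hc; rw [if_neg hc] at hlt; omega
        have hc2 : c.2 < k := by rw [if_pos hc1] at hlt; exact hlt
        exact ⟨⟨hc1, hc2⟩, hmu, by rw [if_pos hc1]; exact hc2, hT⟩
      · rintro ⟨⟨hc1, hc2⟩, hrest⟩
        exact ⟨⟨by omega, by omega⟩, hrest⟩
    rw [hset]
    -- sum over columns
    rw [Finset.card_filter, Finset.sum_product_right]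
    have hcol : ∀ b ∈ Finset.range k,
        (∑ a ∈ Finset.range k, if (if a < k then α (k - 1 - a) else 0) ≤ b ∧
            b < (if a < k then k else 0) ∧ LRauxD.TF k α a b = v then 1 else 0) =
        if LRauxD.rF k α b + v < k then 1 else 0 := by
      intro b hb
      rw [Finset.mem_range] at hb
      rw [← Finset.card_filter]
      have heq : (Finset.range k).filter (fun a => (if a < k then α (k - 1 - a) else 0) ≤ b ∧
            b < (if a < k then k else 0) ∧ LRauxD.TF k α a b = v) =
          if LRauxD.rF k α b + v < k then {LRauxD.rF k α b + v} else ∅ := by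
        split_ifs with hcase
        · ext a
          simp only [Finset.mem_filter, Finset.mem_range, Finset.mem_singleton]
          constructor
          · rintro ⟨hak, hmu, _, hT⟩
            rw [if_pos hak] at hmu
            have hr : LRauxD.rF k α b ≤ a :=
              (LRauxD.r_spec k α hαmono b a hak).mp (by simpa [LRauxD.muF, hak] using hmu)
            rw [LRauxD.T_val k α hαmono a b (by omega) hr] at hT
            omega
          · intro ha
            subst ha
            have hak : LRauxD.rF k α b + v < k := hcase
            have hmu : LRauxD.muF k α (LRauxD.rF k α b + v) ≤ b :=
              (LRauxD.r_spec k α hαmono b _ hak).mpr (by omega)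
            refine ⟨hak, ?_, ?_, ?_⟩
            · rw [if_pos hak]; simpa [LRauxD.muF, hak] using hmu
            · rw [if_pos hak]; exact hb
            · rw [LRauxD.T_val k α hαmono _ b (by omega) (by omega)]; omega
        · ext a
          simp only [Finset.mem_filter, Finset.mem_range, Finset.notMem_empty, iff_false,
            not_and]
          intro hak hmu _
          rw [if_pos hak] at hmu
          have hr : LRauxD.rF k α b ≤ a :=
            (LRauxD.r_spec k α hαmono b a hak).mp (by simpa [LRauxD.muF, hak] using hmu)
          rw [LRauxD.T_val k α hαmono a b (by omega) hr]
          omega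
      rw [heq]
      split_ifs <;> simp
    rw [Finset.sum_congr rfl hcol, ← Finset.card_filter]
    -- now: #{b < k : rF b + v < k} = conjMap k β' v
    show _ = conjMap k (fun j => if j < k then β (k - 1 - j) else 0) v
    unfold conjMap
    have hRHS : (Finset.range k).filter
          (fun j => v < if j < k then β (k - 1 - j) else 0) =
        (Finset.range k).filter (fun j => v < β (k - 1 - j)) := by
      apply Finset.filter_congr
      intro j hj
      rw [Finset.mem_range] at hj
      rw [if_pos hj]
    rw [hRHS]
    have hrefl : ((Finset.range k).filter (fun j => v < β (k - 1 - j))).card =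
        ((Finset.range k).filter (fun i => v < β i)).card := by
      apply Finset.card_bij' (fun j _ => k - 1 - j) (fun j _ => k - 1 - j)
      · intro a ha
        rw [Finset.mem_filter, Finset.mem_range] at ha ⊢
        exact ⟨by omega, ha.2⟩
      · intro a ha
        rw [Finset.mem_filter, Finset.mem_range] at ha ⊢
        refine ⟨by omega, ?_⟩
        rw [show k - 1 - (k - 1 - a) = a from by omega]
        exact ha.2
      · intro a ha
        rw [Finset.mem_filter, Finset.mem_range] at ha
        omega
      · intro a ha
        rw [Finset.mem_filter, Finset.mem_range] at ha
        omega
    rw [hrefl]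
    rcases Nat.lt_or_ge v k with hv | hv
    · -- v < k : both sides are k - α v
      have hLHS : (Finset.range k).filter (fun b => LRauxD.rF k α b + v < k) =
          (Finset.range k).filter (fun b => α v ≤ b) := by
        apply Finset.filter_congr
        intro b hb
        rw [Finset.mem_range] at hb
        have hs := LRauxD.r_spec k α hαmono b (k - 1 - v) (by omega)
        have hmuv : LRauxD.muF k α (k - 1 - v) = α v := by
          simp only [LRauxD.muF, if_pos (show k - 1 - v < k by omega)]
          rw [show k - 1 - (k - 1 - v) = v from by omega]
        rw [hmuv] at hs
        constructor
        · intro h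
          exact hs.mpr (by omega)
        · intro h
          have := hs.mp h
          omega
      rw [hLHS]
      have h1 : (Finset.range k).filter (fun b => α v ≤ b) = Finset.Ico (α v) k := by
        ext b
        rw [Finset.mem_filter, Finset.mem_range, Finset.mem_Ico]
        omega
      rw [h1, Nat.card_Ico]
      have h2 : (Finset.range k).filter (fun i => v < β i) =
          Finset.range k \ (Finset.range k).filter (fun i => β i ≤ v) := by
        ext i
        simp only [Finset.mem_filter, Finset.mem_sdiff, Finset.mem_range, not_and]
        omega
      rw [h2, Finset.card_sdiff_of_subset (Finset.filter_subset _ _), Finset.card_range]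
      rw [LRauxD.s_eq k α β hαmono hβmono hcross hbddα hbddβ hcover v hv]
    · -- v ≥ k : both sides are 0
      have hLHS : (Finset.range k).filter (fun b => LRauxD.rF k α b + v < k) = ∅ := by
        apply Finset.filter_false_of_mem
        intro b _
        omega
      have hRHS2 : (Finset.range k).filter (fun i => v < β i) = ∅ := by
        apply Finset.filter_false_of_mem
        intro i hi
        rw [Finset.mem_range] at hi
        have := hβle i hi
        omega
      rw [hLHS, hRHS2]
  -- Part 4: lattice word condition
  · intro i j v
    apply Finset.card_le_card_of_injOn (fun c => (c.1 - 1, c.2))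
    · intro c hc
      simp only [Finset.mem_coe, Finset.mem_filter, Finset.mem_product, Finset.mem_range] at hc ⊢
      obtain ⟨⟨hB1, hB2⟩, hpre, hmu, hlt, hT⟩ := hc
      have hc1 : c.1 < k := by by_contra h; rw [if_neg h] at hlt; omega
      have hc2 : c.2 < k := by rw [if_pos hc1] at hlt; exact hlt
      rw [if_pos hc1] at hmu
      have hr : LRauxD.rF k α c.2 ≤ c.1 :=
        (LRauxD.r_spec k α hαmono c.2 c.1 hc1).mp (by simpa [LRauxD.muF, hc1] using hmu)
      have hTv : c.1 - LRauxD.rF k α c.2 = v + 1 := by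
        rw [← LRauxD.T_val k α hαmono c.1 c.2 (by omega) hr]
        exact hT
      have ha : c.1 = LRauxD.rF k α c.2 + v + 1 := by omega
      have hc1' : c.1 - 1 < k := by omega
      have hmu' : LRauxD.muF k α (c.1 - 1) ≤ c.2 :=
        (LRauxD.r_spec k α hαmono c.2 (c.1 - 1) hc1').mpr (by omega)
      refine ⟨⟨by omega, hB2⟩, ?_, ?_, ?_, ?_⟩
      · left
        rcases hpre with h | ⟨h, _⟩
        · omega
        · omega
      · rw [if_pos hc1']
        simpa [LRauxD.muF, hc1'] using hmu'
      · rw [if_pos hc1']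
        exact hc2
      · rw [LRauxD.T_val k α hαmono (c.1 - 1) c.2 (by omega) (by omega)]
        omega
    · intro c hc c' hc' heq
      simp only [Finset.coe_filter, Set.mem_setOf_eq, Finset.mem_product, Finset.mem_range] at hc hc'
      obtain ⟨-, -, hmu, hlt, hT⟩ := hc
      obtain ⟨-, -, hmu', hlt', hT'⟩ := hc'
      have hc1 : c.1 < k := by by_contra h; rw [if_neg h] at hlt; omega
      have hc1' : c'.1 < k := by by_contra h; rw [if_neg h] at hlt'; omega
      rw [if_pos hc1] at hmu
      rw [if_pos hc1'] at hmu'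
      have hr : LRauxD.rF k α c.2 ≤ c.1 :=
        (LRauxD.r_spec k α hαmono c.2 c.1 hc1).mp (by simpa [LRauxD.muF, hc1] using hmu)
      have hr' : LRauxD.rF k α c'.2 ≤ c'.1 :=
        (LRauxD.r_spec k α hαmono c'.2 c'.1 hc1').mp (by simpa [LRauxD.muF, hc1'] using hmu')
      rw [LRauxD.T_val k α hαmono c.1 c.2 (by omega) hr] at hT
      rw [LRauxD.T_val k α hαmono c'.1 c'.2 (by omega) hr'] at hT'
      have heq' : (c.1 - 1, c.2) = (c'.1 - 1, c'.2) := heq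
      rw [Prod.mk.injEq] at heq'
      obtain ⟨h1, h2⟩ := heq'
      have : c.1 = c'.1 := by rw [h2] at hT; omega
      exact Prod.ext this h2
end

section
/- Let (α, β) be a bipartition of n = k(k+1) satisfying the conditions: α = (α_0 ≤ ... ≤ α_k), β = (β_0 ≤ ... ≤ β_{k-1}) (zeros allowed), and {α_i + i} ∪ {β_j + j} = {0, 1, ..., 2k} as sets. Define α¹ by α¹_i = α_{i+1} for i < k and α¹_k = k, and β¹ by β¹_j = max(β_j - 1, 0). Then (α¹, β¹) again satisfies the same conditions, i.e., {α¹_i + i : 0 ≤ i ≤ k} ∪ {β¹_j + j : 0 ≤ j ≤ k-1} = {0, 1, ..., 2k} with no repetitions. -/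
/-- the key inductive step for type C. Let `(α, β)` satisfy: `α` has `k+1`
weakly increasing parts `α_0 ≤ ... ≤ α_k`, `β` has `k` weakly increasing parts
`β_0 ≤ ... ≤ β_{k-1}` (zeros allowed), total sum `n = k(k+1)`, and the shifted entries
`{α_i + i : i ≤ k} ∪ {β_j + j : j < k}` are pairwise distinct and exhaust
`{0, 1, ..., 2k}`. Define `α¹_i = α_{i+1}` for `i < k`, `α¹_k = k`, and
`β¹_j = max(β_j - 1, 0)` (truncated subtraction). Then the shifted entries of
`(α¹, β¹)` are again pairwise distinct and exhaust `{0, 1, ..., 2k}`. -/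
theorem typeC_inductive_step (k : ℕ) (hk : 1 ≤ k) (α β : ℕ → ℕ)
    (hαmono : ∀ i j, i ≤ j → j ≤ k → α i ≤ α j)
    (hβmono : ∀ i j, i ≤ j → j < k → β i ≤ β j)
    (hsum : (∑ i ∈ Finset.range (k + 1), α i) + (∑ j ∈ Finset.range k, β j) = k * (k + 1))
    (hcross : ∀ i ≤ k, ∀ j < k, α i + i ≠ β j + j)
    (hbddα : ∀ i ≤ k, α i + i ≤ 2 * k)
    (hbddβ : ∀ j < k, β j + j ≤ 2 * k)
    (hcover : ∀ m ≤ 2 * k, (∃ i ≤ k, α i + i = m) ∨ (∃ j < k, β j + j = m)) :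
    (∀ i ≤ k, ∀ i' ≤ k,
      (if i < k then α (i + 1) else k) + i = (if i' < k then α (i' + 1) else k) + i' →
        i = i') ∧
    (∀ j < k, ∀ j' < k, (β j - 1) + j = (β j' - 1) + j' → j = j') ∧
    (∀ i ≤ k, ∀ j < k, (if i < k then α (i + 1) else k) + i ≠ (β j - 1) + j) ∧
    (∀ m ≤ 2 * k,
      (∃ i ≤ k, (if i < k then α (i + 1) else k) + i = m) ∨
      (∃ j < k, (β j - 1) + j = m)) := by
  set A : ℕ → ℕ := fun i => (if i < k then α (i + 1) else k) + i with hA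
  set B : ℕ → ℕ := fun j => (β j - 1) + j with hB
  -- if β j = 0 then α 0 ≥ j + 1
  have hzero : ∀ j < k, β j = 0 → j + 1 ≤ α 0 := by
    intro j hj h0
    by_contra h
    push_neg at h
    have hle : α 0 ≤ j := by omega
    have h1 : β (α 0) ≤ β j := hβmono _ _ hle hj
    have hb : β (α 0) = 0 := by omega
    have := hcross 0 (by omega) (α 0) (by omega)
    omega
  -- strict monotonicity of the new shifted α entries
  have hAmono : ∀ i i', i < i' → i' ≤ k → A i < A i' := by
    intro i i' h hi'
    simp only [hA]
    by_cases h' : i' < k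
    · have hik : i < k := lt_trans h h'
      have := hαmono (i + 1) (i' + 1) (by omega) (by omega)
      simp only [if_pos h', if_pos hik]
      omega
    · have hik : i < k := by omega
      have := hbddα (i + 1) (by omega)
      simp only [if_pos hik, if_neg h']
      omega
  -- strict monotonicity of the new shifted β entries
  have hBmono : ∀ j j', j < j' → j' < k → B j < B j' := by
    intro j j' h hj'
    have := hβmono j j' (le_of_lt h) hj'
    simp only [hB]
    omega
  -- cross distinctness
  have hcrossnew : ∀ i ≤ k, ∀ j < k, A i ≠ B j := by
    intro i hi j hj heq
    simp only [hA, hB] at heq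
    by_cases h0 : β j = 0
    · have h1 := hzero j hj h0
      by_cases hik : i < k
      · have h2 := hαmono 0 (i + 1) (by omega) (by omega)
        simp only [if_pos hik] at heq
        omega
      · simp only [if_neg hik] at heq
        omega
    · by_cases hik : i < k
      · simp only [if_pos hik] at heq
        have := hcross (i + 1) (by omega) j hj
        omega
      · simp only [if_neg hik] at heq
        have := hbddβ j hj
        omega
  -- the combined indexing function
  set g : ℕ → ℕ := fun m => if m ≤ k then A m else B (m - (k + 1)) with hg
  have hgbdd : ∀ m, m ∈ Finset.range (2 * k + 1) → g m ∈ Finset.range (2 * k + 1) := by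
    intro m hm
    rw [Finset.mem_range] at hm ⊢
    simp only [hg]
    by_cases h : m ≤ k
    · simp only [if_pos h, hA]
      by_cases h' : m < k
      · have := hbddα (m + 1) (by omega)
        simp only [if_pos h']
        omega
      · simp only [if_neg h']
        omega
    · simp only [if_neg h, hB]
      have := hbddβ (m - (k + 1)) (by omega)
      omega
  have hginj : Set.InjOn g (Finset.range (2 * k + 1)) := by
    intro a ha b hb hab
    rw [Finset.coe_range, Set.mem_Iio] at ha hb
    simp only [hg] at hab
    by_cases h1 : a ≤ k <;> by_cases h2 : b ≤ k
    · simp only [if_pos h1, if_pos h2] at hab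
      rcases lt_trichotomy a b with h | h | h
      · exact absurd hab (ne_of_lt (hAmono a b h h2))
      · exact h
      · exact absurd hab.symm (ne_of_lt (hAmono b a h h1))
    · simp only [if_pos h1, if_neg h2] at hab
      exact absurd hab (hcrossnew a h1 (b - (k + 1)) (by omega))
    · simp only [if_neg h1, if_pos h2] at hab
      exact absurd hab.symm (hcrossnew b h2 (a - (k + 1)) (by omega))
    · simp only [if_neg h1, if_neg h2] at hab
      rcases lt_trichotomy (a - (k + 1)) (b - (k + 1)) with h | h | h
      · exact absurd hab (ne_of_lt (hBmono _ _ h (by omega)))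
      · omega
      · exact absurd hab.symm (ne_of_lt (hBmono _ _ h (by omega)))
  have himg : Finset.image g (Finset.range (2 * k + 1)) = Finset.range (2 * k + 1) := by
    apply Finset.eq_of_subset_of_card_le
    · intro x hx
      rw [Finset.mem_image] at hx
      obtain ⟨a, ha, rfl⟩ := hx
      exact hgbdd a ha
    · rw [Finset.card_image_of_injOn hginj, Finset.card_range]
  refine ⟨?_, ?_, ?_, ?_⟩
  · intro i hi i' hi' heq
    rcases lt_trichotomy i i' with h | h | h
    · exact absurd heq (ne_of_lt (hAmono i i' h hi'))
    · exact h
    · exact absurd heq.symm (ne_of_lt (hAmono i' i h hi))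
  · intro j hj j' hj' heq
    rcases lt_trichotomy j j' with h | h | h
    · exact absurd heq (ne_of_lt (hBmono j j' h hj'))
    · exact h
    · exact absurd heq.symm (ne_of_lt (hBmono j' j h hj))
  · exact hcrossnew
  · intro m hm
    have : m ∈ Finset.image g (Finset.range (2 * k + 1)) := by
      rw [himg, Finset.mem_range]; omega
    rw [Finset.mem_image] at this
    obtain ⟨a, ha, hga⟩ := this
    rw [Finset.mem_range] at ha
    simp only [hg] at hga
    by_cases h : a ≤ k
    · left
      exact ⟨a, h, by simpa [if_pos h] using hga⟩
    · right
      exact ⟨a - (k + 1), by omega, by simpa [if_neg h] using hga⟩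
end

section
/- Let λ be a partition of 2n all of whose parts are even and in which each distinct part has multiplicity at most 2 (so λ parameterises a solvable nilpotent orbit of sp(2n)). If additionally λᵗ is a partition in which every odd part occurs with even multiplicity (λ is special) and λ = (λᵗ)_C, then n = k(k+1) for some k ≥ 1 and λ = (2k, 2k, 2k-2, 2k-2, ..., 2, 2). -/
lemma aux_conj_lt_iff {N : ℕ} {f : ℕ → ℕ} (hf : Antitone f) (hsupp : ∀ i, N ≤ i → f i = 0)
    (t j : ℕ) : j < conjMap N f t ↔ t < f j := by
  constructor
  · intro h
    by_contra hle
    push_neg at hle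
    have hsub : (Finset.range N).filter (fun i => t < f i) ⊆ Finset.range j := by
      intro i hi
      simp only [Finset.mem_filter, Finset.mem_range] at hi ⊢
      by_contra hij
      push_neg at hij
      have := hf hij
      omega
    have := Finset.card_le_card hsub
    simp only [conjMap, Finset.card_range] at h this
    omega
  · intro h
    have hjN : j < N := by
      by_contra hN
      push_neg at hN
      rw [hsupp j hN] at h
      omega
    have hsub : Finset.range (j+1) ⊆ (Finset.range N).filter (fun i => t < f i) := by
      intro i hi
      simp only [Finset.mem_range] at hi
      simp only [Finset.mem_filter, Finset.mem_range]
      have := hf (show i ≤ j by omega)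
      exact ⟨by omega, by omega⟩
    have := Finset.card_le_card hsub
    simp only [Finset.card_range, conjMap] at this ⊢
    omega

lemma aux_filter_eq {N : ℕ} {f : ℕ → ℕ} (hf : Antitone f) (hsupp : ∀ i, N ≤ i → f i = 0)
    (t : ℕ) : (Finset.range N).filter (fun j => t < f j) = Finset.range (conjMap N f t) := by
  ext j
  simp only [Finset.mem_filter, Finset.mem_range, aux_conj_lt_iff hf hsupp t j]
  constructor
  · exact fun h => h.2
  · intro h
    refine ⟨?_, h⟩
    by_contra hN
    push_neg at hN
    rw [hsupp j hN] at h
    omega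

lemma aux_mult_eq {N : ℕ} {f : ℕ → ℕ} (hf : Antitone f) (hsupp : ∀ i, N ≤ i → f i = 0)
    (t : ℕ) : ((Finset.range N).filter (fun i => f i = t + 1)).card
      = conjMap N f t - conjMap N f (t+1) := by
  have hset : (Finset.range N).filter (fun i => f i = t + 1)
      = (Finset.range N).filter (fun j => t < f j) \ (Finset.range N).filter (fun j => t+1 < f j) := by
    ext i
    simp only [Finset.mem_filter, Finset.mem_sdiff, Finset.mem_range]
    omega
  rw [hset, aux_filter_eq hf hsupp, aux_filter_eq hf hsupp]
  have hmono : conjMap N f (t+1) ≤ conjMap N f t := by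
    apply Finset.card_le_card
    intro i hi
    simp only [Finset.mem_filter] at hi ⊢
    exact ⟨hi.1, by omega⟩
  rw [Finset.card_sdiff_of_subset (Finset.range_subset_range.2 hmono), Finset.card_range, Finset.card_range]

lemma aux_domle_eq {f g : ℕ → ℕ} (h1 : DomLE f g) (h2 : DomLE g f) (i : ℕ) : f i = g i := by
  have ha := le_antisymm (h1 (i+1)) (h2 (i+1))
  have hb := le_antisymm (h1 i) (h2 i)
  rw [Finset.sum_range_succ, Finset.sum_range_succ] at ha
  omega

lemma aux_sum_conj {N : ℕ} {f : ℕ → ℕ} (hle : ∀ j, f j ≤ N) :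
    ∑ i ∈ Finset.range N, conjMap N f i = ∑ j ∈ Finset.range N, f j := by
  unfold conjMap
  simp_rw [Finset.card_filter]
  rw [Finset.sum_comm]
  refine Finset.sum_congr rfl fun j hj => ?_
  rw [← Finset.card_filter]
  have : (Finset.range N).filter (fun i => i < f j) = Finset.range (f j) := by
    ext i
    simp only [Finset.mem_filter, Finset.mem_range]
    have := hle j
    omega
  rw [this, Finset.card_range]

lemma aux_sum_formula : ∀ k : ℕ, ∑ i ∈ Finset.range (2*k), (k - i/2) = k*(k+1) := by
  intro k
  induction k with
  | zero => simp
  | succ k ih =>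
    have h2 : 2*(k+1) = 2*k + 1 + 1 := by ring
    rw [h2, Finset.sum_range_succ, Finset.sum_range_succ]
    have hcongr : ∑ i ∈ Finset.range (2*k), (k+1 - i/2)
        = ∑ i ∈ Finset.range (2*k), ((k - i/2) + 1) := by
      refine Finset.sum_congr rfl fun i hi => ?_
      simp only [Finset.mem_range] at hi
      omega
    rw [hcongr, Finset.sum_add_distrib, ih, Finset.sum_const, Finset.card_range, smul_eq_mul]
    have e1 : (2*k)/2 = k := by omega
    have e2 : (2*k+1)/2 = k := by omega
    rw [e1, e2]
    have : (k+1)*(k+1+1) = k*(k+1) + 2*k + 2 := by ring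
    omega

/-- Let `λ` be a partition of `2n` (`n ≥ 1`) all of whose parts are even
and in which each distinct (positive) part has multiplicity at most 2 — i.e. `λ`
parameterises a solvable nilpotent orbit of `sp(2n)`. Suppose moreover that `λᵗ` lies in
`P_{-1}(2n)` (i.e. `λ` is special) and that `λ = (λᵗ)_C`, i.e. `λ` is the greatest
element in dominance order among partitions of `2n` in `P_{-1}(2n)` dominated by `λᵗ`.
Then `n = k(k+1)` for some `k ≥ 1` and `λ = (2k, 2k, 2k-2, 2k-2, ..., 2, 2)`. -/
theorem typeC_selfdual_solvable_unique (n : ℕ) (hn : 1 ≤ n) (lam : ℕ → ℕ)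
    (hpart : IsPartitionOf (2 * n) lam)
    (heven : ∀ i, Even (lam i))
    (hmult : ∀ m, 0 < m → ((Finset.range (2 * n)).filter (fun i => lam i = m)).card ≤ 2)
    (hspecial : OddPartsEvenMult (2 * n) (conjMap (2 * n) lam))
    (hle : DomLE lam (conjMap (2 * n) lam))
    (hcollapse : ∀ g : ℕ → ℕ,
      IsPartitionOf (2 * n) g → OddPartsEvenMult (2 * n) g →
      DomLE g (conjMap (2 * n) lam) → DomLE g lam) :
    ∃ k : ℕ, 1 ≤ k ∧ n = k * (k + 1) ∧ lam = (fun i => 2 * (k - i / 2)) := by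

  obtain ⟨hanti, hsupp, hsum⟩ := hpart
  have hbd : ∀ j, lam j ≤ 2 * n := by
    intro j
    by_cases hj : j < 2 * n
    · calc lam j ≤ ∑ i ∈ Finset.range (2 * n), lam i :=
            Finset.single_le_sum (fun i _ => Nat.zero_le _) (Finset.mem_range.2 hj)
        _ = 2 * n := hsum
    · rw [hsupp j (by omega)]; omega
  have hconjanti : Antitone (conjMap (2 * n) lam) := by
    intro a b hab
    apply Finset.card_le_card
    intro i hi
    simp only [Finset.mem_filter] at hi ⊢
    exact ⟨hi.1, by omega⟩
  have hconjsupp : ∀ i, 2 * n ≤ i → conjMap (2 * n) lam i = 0 := by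
    intro i hi
    simp only [conjMap, Finset.card_eq_zero]
    apply Finset.filter_false_of_mem
    intro j hj
    have := hbd j
    omega
  have hconjpart : IsPartitionOf (2 * n) (conjMap (2 * n) lam) :=
    ⟨hconjanti, hconjsupp, by rw [aux_sum_conj hbd]; exact hsum⟩
  have hge : DomLE (conjMap (2 * n) lam) lam :=
    hcollapse _ hconjpart hspecial (fun _ => le_rfl)
  have hconj : ∀ t, conjMap (2 * n) lam t = lam t := fun t => aux_domle_eq hge hle t
  -- pairing: consecutive parts at positions 2j, 2j+1 are equal
  have hpair : ∀ j, lam (2 * j + 1) = lam (2 * j) := by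
    intro j
    have hle1 : lam (2 * j + 1) ≤ lam (2 * j) := hanti (by omega)
    by_contra hne
    have hlt : lam (2 * j + 1) < lam (2 * j) := by omega
    set t := lam (2 * j + 1) with ht
    have h1 : 2 * j < conjMap (2 * n) lam t :=
      (aux_conj_lt_iff hanti hsupp t (2 * j)).2 hlt
    have h2 : ¬ (2 * j + 1 < conjMap (2 * n) lam t) := by
      rw [aux_conj_lt_iff hanti hsupp t (2 * j + 1)]
      omega
    have h3 := hconj t
    obtain ⟨a, ha⟩ := heven t
    omega
  -- consecutive drops are at most 2
  have hdrop : ∀ t, lam t ≤ lam (t + 1) + 2 := by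
    intro t
    have hm := hmult (t + 1) (by omega)
    rw [aux_mult_eq hanti hsupp t, hconj t, hconj (t + 1)] at hm
    have := hanti (show t ≤ t + 1 by omega)
    omega
  have hk0 : lam 0 = 2 * (lam 0 / 2) := by
    obtain ⟨a, ha⟩ := heven 0
    omega
  set k := lam 0 / 2 with hkdef
  have hstruct : ∀ j, lam (2 * j) = 2 * (k - j) := by
    intro j
    induction j with
    | zero => simpa using hk0
    | succ j ih =>
      by_cases hz : k ≤ j
      · have h0 : lam (2 * j) = 0 := by rw [ih]; omega
        have hmon : lam (2 * (j + 1)) ≤ lam (2 * j) := hanti (by omega)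
        omega
      · have hpos : 0 < lam (2 * j) := by rw [ih]; omega
        have hstrict : lam (2 * j + 2) < lam (2 * j) := by
          by_contra hh
          push_neg at hh
          have hle2 : lam (2 * j + 2) ≤ lam (2 * j) := hanti (by omega)
          have heq2 : lam (2 * j + 2) = lam (2 * j) := le_antisymm hle2 hh
          set m := lam (2 * j) with hm
          have hin : 2 * j + 2 < 2 * n := by
            by_contra hN
            push_neg at hN
            have := hsupp (2 * j + 2) hN
            omega
          have hsub : ({2 * j, 2 * j + 1, 2 * j + 2} : Finset ℕ) ⊆
              (Finset.range (2 * n)).filter (fun i => lam i = m) := by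
            intro x hx
            simp only [Finset.mem_insert, Finset.mem_singleton] at hx
            simp only [Finset.mem_filter, Finset.mem_range]
            rcases hx with rfl | rfl | rfl
            · exact ⟨by omega, rfl⟩
            · exact ⟨by omega, hpair j⟩
            · exact ⟨by omega, heq2⟩
          have hcard : ({2 * j, 2 * j + 1, 2 * j + 2} : Finset ℕ).card = 3 := by
            rw [Finset.card_insert_of_notMem (by
                  simp only [Finset.mem_insert, Finset.mem_singleton]; omega),
              Finset.card_insert_of_notMem (by
                  simp only [Finset.mem_singleton]; omega),
              Finset.card_singleton]
          have hc1 := Finset.card_le_card hsub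
          have hc2 := hmult m hpos
          omega
        have hd := hdrop (2 * j + 1)
        have hp := hpair j
        obtain ⟨a, ha⟩ := heven (2 * (j + 1))
        have e1 : 2 * j + 1 + 1 = 2 * (j + 1) := by ring
        have e2 : 2 * j + 2 = 2 * (j + 1) := by ring
        rw [e1] at hd
        rw [e2] at hstrict
        omega
  have hall : ∀ i, lam i = 2 * (k - i / 2) := by
    intro i
    rcases Nat.even_or_odd i with ⟨j, hj⟩ | ⟨j, hj⟩
    · have hi : i = 2 * j := by omega
      rw [hi, hstruct j]
      omega
    · have hi : i = 2 * j + 1 := by omega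
      rw [hi, hpair j, hstruct j]
      omega
  have hfun : lam = (fun i => 2 * (k - i / 2)) := funext hall
  have h2k : 2 * k ≤ 2 * n := by
    have h0 : (0 : ℕ) ∈ Finset.range (2 * n) := Finset.mem_range.2 (by omega)
    have hs := Finset.single_le_sum (f := lam) (fun i _ => Nat.zero_le _) h0
    omega
  have hsum2 : ∑ i ∈ Finset.range (2 * n), (k - i / 2) = k * (k + 1) := by
    rw [← Finset.sum_subset (Finset.range_subset_range.2 h2k) (fun x _ hnx => by
      simp only [Finset.mem_range] at hnx
      omega)]
    exact aux_sum_formula k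
  have hsum3 : 2 * n = 2 * (k * (k + 1)) := by
    rw [← hsum]
    calc ∑ i ∈ Finset.range (2 * n), lam i
        = ∑ i ∈ Finset.range (2 * n), 2 * (k - i / 2) :=
          Finset.sum_congr rfl (fun i _ => hall i)
      _ = 2 * ∑ i ∈ Finset.range (2 * n), (k - i / 2) := by rw [Finset.mul_sum]
      _ = 2 * (k * (k + 1)) := by rw [hsum2]
  have hnk : n = k * (k + 1) := by omega
  have hk1 : 1 ≤ k := by
    rcases Nat.eq_zero_or_pos k with h | h
    · rw [h] at hnk; simp at hnk; omega
    · exact h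
  exact ⟨k, hk1, hnk, hfun⟩
end

section
/- For i ≥ j ≥ 0 with i + j ≤ n, the product of elementary symmetric polynomials e_i · e_j in n variables expands in the Schur basis as e_i e_j = Σ_{k=i}^{i+j} s_{(2^{i+j-k}, 1^{2k-i-j})}, where s_μ denotes the Schur polynomial indexed by μ (terms with partitions having more than n rows omitted/zero). -/
open MvPolynomial

/-- The alternant `a_{μ+δ} = det (X_i ^ (μ_j + (N-1-j)))` in `N` variables, for a
partition `μ` given as a function `ℕ → ℕ`.  The Schur polynomial is the bialternant
`s_μ = a_{μ+δ} / a_δ`, where `a_δ = alternant N 0` is the Vandermonde alternant. -/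
noncomputable def alternant (N : ℕ) (μ : ℕ → ℕ) : MvPolynomial (Fin N) ℂ :=
  Matrix.det (Matrix.of fun i j : Fin N => (X i : MvPolynomial (Fin N) ℂ) ^ (μ j + (N - 1 - (j : ℕ))))

/-- The column-pair partition `(2^a, 1^b)`: `a` parts equal to `2` followed by `b` parts
equal to `1`. -/
def colShape (a b : ℕ) : ℕ → ℕ := fun i => if i < a then 2 else if i < a + b then 1 else 0

open Finset

/-- Generalized alternant with arbitrary exponent function on columns. -/
noncomputable def D (N : ℕ) (e : Fin N → ℕ) : MvPolynomial (Fin N) ℂ :=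
  Matrix.det (Matrix.of fun p q : Fin N => (X p : MvPolynomial (Fin N) ℂ) ^ e q)

lemma D_congr {N : ℕ} {e f : Fin N → ℕ} (h : ∀ q, e q = f q) : D N e = D N f := by
  have : e = f := funext h
  rw [this]

lemma D_zero {N : ℕ} {e : Fin N → ℕ} {q1 q2 : Fin N} (h : q1 ≠ q2) (he : e q1 = e q2) :
    D N e = 0 := by
  apply Matrix.det_zero_of_column_eq h
  intro p
  simp [he]

lemma D_zero_of_adj {N : ℕ} (μ : Fin N → ℕ) (t : ℕ) (ht : t + 1 < N)
    (h : μ ⟨t + 1, ht⟩ = μ ⟨t, by omega⟩ + 1) :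
    D N (fun q => μ q + (N - 1 - q.val)) = 0 := by
  apply D_zero (q1 := (⟨t, by omega⟩ : Fin N)) (q2 := (⟨t + 1, ht⟩ : Fin N))
  · exact Fin.ne_of_val_ne (show t ≠ t + 1 by omega)
  · show μ ⟨t, by omega⟩ + (N - 1 - t) = μ ⟨t + 1, ht⟩ + (N - 1 - (t + 1))
    rw [h]
    omega

/-- Pieri-type expansion: multiplying a generalized alternant by `e_m` adds `1` to the
exponents of the columns indexed by an `m`-subset, summed over all `m`-subsets. -/
lemma key (N m : ℕ) (e : Fin N → ℕ) :
    D N e * esymm (Fin N) ℂ m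
      = ∑ S ∈ Finset.powersetCard m (Finset.univ : Finset (Fin N)),
          D N (fun q => e q + if q ∈ S then 1 else 0) := by
  unfold D esymm
  simp only [Matrix.det_apply, Matrix.of_apply]
  rw [Finset.sum_mul_sum]
  rw [show ∀ (f : Finset (Fin N) → Equiv.Perm (Fin N) → MvPolynomial (Fin N) ℂ),
      (∑ S ∈ powersetCard m (univ : Finset (Fin N)), ∑ σ : Equiv.Perm (Fin N), f S σ)
      = ∑ σ : Equiv.Perm (Fin N), ∑ S ∈ powersetCard m (univ : Finset (Fin N)), f S σ
      from fun f => Finset.sum_comm]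
  refine Finset.sum_congr rfl fun σ _ => ?_
  refine Finset.sum_nbij' (fun S => S.map σ.symm.toEmbedding)
    (fun S => S.map σ.toEmbedding) ?_ ?_ ?_ ?_ ?_
  · intro S hS
    simp only [Finset.mem_powersetCard] at hS ⊢
    exact ⟨Finset.subset_univ _, by rw [Finset.card_map]; exact hS.2⟩
  · intro S hS
    simp only [Finset.mem_powersetCard] at hS ⊢
    exact ⟨Finset.subset_univ _, by rw [Finset.card_map]; exact hS.2⟩
  · intro S hS
    ext x
    simp [Finset.mem_map_equiv]
  · intro S hS
    ext x
    simp [Finset.mem_map_equiv]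
  · intro S hS
    rw [smul_mul_assoc]
    congr 1
    simp only [Finset.mem_map_equiv, Equiv.symm_symm, pow_add, Finset.prod_mul_distrib]
    congr 1
    rw [Equiv.prod_comp σ (fun y => (X y : MvPolynomial (Fin N) ℂ) ^ (if y ∈ S then 1 else 0))]
    simp only [pow_ite, pow_one, pow_zero]
    rw [Finset.prod_ite_mem, Finset.univ_inter]

lemma card_filter_Ico (N a b : ℕ) (hb : b ≤ N) :
    ((Finset.univ : Finset (Fin N)).filter (fun q => a ≤ q.val ∧ q.val < b)).card = b - a := by
  rw [← Nat.card_Ico a b]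
  rw [← Finset.card_image_of_injective _ (Fin.val_injective)]
  congr 1
  ext t
  simp only [Finset.mem_image, Finset.mem_filter, Finset.mem_univ, true_and, Finset.mem_Ico]
  constructor
  · rintro ⟨q, hq, rfl⟩; exact hq
  · rintro ⟨h1, h2⟩; exact ⟨⟨t, lt_of_lt_of_le h2 hb⟩, ⟨h1, h2⟩, rfl⟩

lemma card_filter_lt (N b : ℕ) (hb : b ≤ N) :
    ((Finset.univ : Finset (Fin N)).filter (fun q => q.val < b)).card = b := by
  have h := card_filter_Ico N 0 b hb
  simp only [Nat.zero_le, true_and, Nat.sub_zero] at h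
  exact h

/-- A finset of `Fin N` contained in `[a, N)` and closed under predecessor (within `[a,·)`)
is an initial segment `[a, a + card)`. -/
lemma downclosed_eq (N a : ℕ) (S : Finset (Fin N))
    (hS : ∀ q ∈ S, a ≤ q.val)
    (h : ∀ t (ht : t + 1 < N), a ≤ t → (⟨t + 1, ht⟩ : Fin N) ∈ S → (⟨t, by omega⟩ : Fin N) ∈ S) :
    S = Finset.univ.filter (fun q => a ≤ q.val ∧ q.val < a + S.card) := by
  have down : ∀ d (q : Fin N), q ∈ S → ∀ (p : Fin N), a ≤ p.val → p.val + d = q.val → p ∈ S := by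
    intro d
    induction d with
    | zero => intro q hq p _ hp; have : p = q := Fin.ext (by omega); rwa [this]
    | succ d ih =>
      intro q hq p hap hp
      have hlt : p.val + 1 < N := by omega
      have h1 : (⟨p.val + 1, hlt⟩ : Fin N) ∈ S :=
        ih q hq ⟨p.val + 1, hlt⟩ (by show a ≤ p.val + 1; omega) (by show p.val + 1 + d = q.val; omega)
      have := h p.val hlt hap h1
      simpa using this
  ext q
  simp only [Finset.mem_filter, Finset.mem_univ, true_and]
  constructor
  · intro hq
    refine ⟨hS q hq, ?_⟩
    have hsub : Finset.univ.filter (fun p : Fin N => a ≤ p.val ∧ p.val < q.val + 1) ⊆ S := by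
      intro p hp
      simp only [Finset.mem_filter, Finset.mem_univ, true_and] at hp
      exact down (q.val - p.val) q hq p hp.1 (by omega)
    have hcard := Finset.card_le_card hsub
    rw [card_filter_Ico N a (q.val + 1) (by omega)] at hcard
    have := hS q hq
    omega
  · rintro ⟨haq, hq⟩
    by_contra hqS
    have hsub : S ⊆ Finset.univ.filter (fun p : Fin N => a ≤ p.val ∧ p.val < q.val) := by
      intro p hp
      simp only [Finset.mem_filter, Finset.mem_univ, true_and]
      refine ⟨hS p hp, ?_⟩
      by_contra hc
      exact hqS (down (p.val - q.val) p hp q haq (by omega))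
    have hcard := Finset.card_le_card hsub
    rw [card_filter_Ico N a q.val (by omega)] at hcard
    omega

/-- Step B: `a_δ · e_i` collapses to the single alternant `a_{(1^i)+δ}`. -/
lemma stepB (N i : ℕ) (hiN : i ≤ N) :
    ∑ S ∈ Finset.powersetCard i (Finset.univ : Finset (Fin N)),
      D N (fun q => (0 + (N - 1 - q.val)) + if q ∈ S then 1 else 0)
    = alternant N (colShape 0 i) := by
  have hmem : (Finset.univ.filter (fun q : Fin N => q.val < i)) ∈
      Finset.powersetCard i (Finset.univ : Finset (Fin N)) := by
    simp only [Finset.mem_powersetCard]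
    exact ⟨Finset.filter_subset _ _ |>.trans (Finset.subset_univ _), card_filter_lt N i hiN⟩
  rw [Finset.sum_eq_single_of_mem _ hmem]
  · refine (D_congr fun q => ?_).trans rfl
    simp only [colShape, Finset.mem_filter, Finset.mem_univ, true_and]
    split_ifs <;> omega
  · intro S hS hne
    simp only [Finset.mem_powersetCard] at hS
    -- find an adjacent crossing
    have hdc : ¬ (∀ t (ht : t + 1 < N), 0 ≤ t → (⟨t + 1, ht⟩ : Fin N) ∈ S →
        (⟨t, by omega⟩ : Fin N) ∈ S) := by
      intro hdown
      apply hne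
      have := downclosed_eq N 0 S (fun q _ => Nat.zero_le _) hdown
      rw [this, hS.2]
      congr 1
      ext q
      simp
    push_neg at hdc
    obtain ⟨t, ht, _, htS1, htS0⟩ := hdc
    have := D_zero_of_adj (N := N) (fun q => if q ∈ S then 1 else 0) t ht
      (by simp [htS1, htS0])
    rw [← this]
    refine D_congr fun q => ?_
    show 0 + (N - 1 - q.val) + (if q ∈ S then 1 else 0)
      = (if q ∈ S then 1 else 0) + (N - 1 - q.val)
    omega

/-- Step D: `a_{(1^i)+δ} · e_j` expanded as a sum over `j`-subsets collapses to the
sum of alternants over column-pair shapes. -/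
lemma stepD (N i j : ℕ) (hji : j ≤ i) (hijN : i + j ≤ N) :
    ∑ S ∈ Finset.powersetCard j (Finset.univ : Finset (Fin N)),
      D N (fun q => (colShape 0 i q.val + (N - 1 - q.val)) + if q ∈ S then 1 else 0)
    = ∑ k ∈ Finset.Icc i (i + j), alternant N (colShape (i + j - k) (2 * k - i - j)) := by
  set Sk : ℕ → Finset (Fin N) :=
    fun k => Finset.univ.filter (fun q => q.val < i + j - k ∨ (i ≤ q.val ∧ q.val < k)) with hSk
  have hSkcard : ∀ k ∈ Finset.Icc i (i + j), (Sk k).card = j := by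
    intro k hk
    simp only [Finset.mem_Icc] at hk
    rw [hSk]
    simp only
    rw [Finset.filter_or, Finset.card_union_of_disjoint]
    · rw [card_filter_lt N _ (by omega), card_filter_Ico N i k (by omega)]
      omega
    · rw [Finset.disjoint_filter]
      intro q _ hq
      simp only [not_and, not_lt]
      intro hiq
      omega
  have hSkIco : ∀ k ∈ Finset.Icc i (i + j),
      ((Sk k).filter (fun q => i ≤ q.val)).card = k - i := by
    intro k hk
    simp only [Finset.mem_Icc] at hk
    have : (Sk k).filter (fun q => i ≤ q.val)
        = Finset.univ.filter (fun q : Fin N => i ≤ q.val ∧ q.val < k) := by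
      rw [hSk]
      ext q
      simp only [Finset.mem_filter, Finset.mem_univ, true_and]
      omega
    rw [this, card_filter_Ico N i k (by omega)]
  have himg : (Finset.Icc i (i + j)).image Sk ⊆
      Finset.powersetCard j (Finset.univ : Finset (Fin N)) := by
    intro S hS
    simp only [Finset.mem_image] at hS
    obtain ⟨k, hk, rfl⟩ := hS
    simp only [Finset.mem_powersetCard]
    exact ⟨Finset.subset_univ _, hSkcard k hk⟩
  rw [← Finset.sum_subset himg]
  · rw [Finset.sum_image]
    · refine Finset.sum_congr rfl fun k hk => ?_
      simp only [Finset.mem_Icc] at hk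
      refine (D_congr fun q => ?_).trans rfl
      rw [hSk]
      simp only [colShape, Finset.mem_filter, Finset.mem_univ, true_and]
      split_ifs <;> omega
    · intro k1 hk1 k2 hk2 heq
      have h1 := hSkIco k1 hk1
      have h2 := hSkIco k2 hk2
      rw [heq] at h1
      rw [h1] at h2
      replace hk1 := Finset.mem_Icc.mp hk1
      replace hk2 := Finset.mem_Icc.mp hk2
      omega
  · intro S hS hSimg
    simp only [Finset.mem_powersetCard] at hS
    -- if no adjacent crossing in either block, S would be in the image
    by_contra hD
    apply hSimg
    have hA : ∀ t (ht : t + 1 < N), t + 1 < i →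
        (⟨t + 1, ht⟩ : Fin N) ∈ S → (⟨t, by omega⟩ : Fin N) ∈ S := by
      intro t ht hti h1
      by_contra h0
      apply hD
      have := D_zero_of_adj (N := N) (fun q => colShape 0 i q.val + if q ∈ S then 1 else 0) t ht
        (by
          show colShape 0 i ((⟨t + 1, ht⟩ : Fin N)).val
              + (if (⟨t + 1, ht⟩ : Fin N) ∈ S then 1 else 0)
            = colShape 0 i ((⟨t, by omega⟩ : Fin N)).val
              + (if (⟨t, by omega⟩ : Fin N) ∈ S then 1 else 0) + 1
          rw [if_pos h1, if_neg h0]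
          show colShape 0 i (t + 1) + 1 = colShape 0 i t + 0 + 1
          simp only [colShape]
          split_ifs <;> omega)
      rw [← this]
      refine D_congr fun q => ?_
      show colShape 0 i q.val + (N - 1 - q.val) + (if q ∈ S then 1 else 0)
        = colShape 0 i q.val + (if q ∈ S then 1 else 0) + (N - 1 - q.val)
      omega
    have hB : ∀ t (ht : t + 1 < N), i ≤ t →
        (⟨t + 1, ht⟩ : Fin N) ∈ S → (⟨t, by omega⟩ : Fin N) ∈ S := by
      intro t ht hti h1
      by_contra h0
      apply hD
      have := D_zero_of_adj (N := N) (fun q => colShape 0 i q.val + if q ∈ S then 1 else 0) t ht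
        (by
          show colShape 0 i ((⟨t + 1, ht⟩ : Fin N)).val
              + (if (⟨t + 1, ht⟩ : Fin N) ∈ S then 1 else 0)
            = colShape 0 i ((⟨t, by omega⟩ : Fin N)).val
              + (if (⟨t, by omega⟩ : Fin N) ∈ S then 1 else 0) + 1
          rw [if_pos h1, if_neg h0]
          show colShape 0 i (t + 1) + 1 = colShape 0 i t + 0 + 1
          simp only [colShape]
          split_ifs <;> omega)
      rw [← this]
      refine D_congr fun q => ?_
      show colShape 0 i q.val + (N - 1 - q.val) + (if q ∈ S then 1 else 0)
        = colShape 0 i q.val + (if q ∈ S then 1 else 0) + (N - 1 - q.val)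
      omega
    -- decompose S into the two blocks
    set T1 := S.filter (fun q => q.val < i) with hT1
    set T2 := S.filter (fun q => i ≤ q.val) with hT2
    have hT1eq : T1 = Finset.univ.filter (fun q : Fin N => 0 ≤ q.val ∧ q.val < 0 + T1.card) := by
      apply downclosed_eq N 0 T1 (fun q _ => Nat.zero_le _)
      intro t ht _ hmem
      rw [hT1, Finset.mem_filter] at hmem ⊢
      have h1i : t + 1 < i := hmem.2
      exact ⟨hA t ht h1i hmem.1, by show t < i; omega⟩
    have hT2eq : T2 = Finset.univ.filter (fun q : Fin N => i ≤ q.val ∧ q.val < i + T2.card) := by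
      apply downclosed_eq N i T2
      · intro q hq; rw [hT2, Finset.mem_filter] at hq; exact hq.2
      · intro t ht hit hmem
        rw [hT2, Finset.mem_filter] at hmem ⊢
        exact ⟨hB t ht hit hmem.1, hit⟩
    have hsplit := Finset.card_filter_add_card_filter_not
      (s := S) (p := fun q : Fin N => q.val < i)
    have hT2' : T2.card = (S.filter (fun q : Fin N => ¬ q.val < i)).card := by
      rw [hT2]
      congr 1
      apply Finset.filter_congr
      intro q _
      simp [not_lt]
    have hcards : T1.card + T2.card = j := by
      rw [hT1, hT2', ← hS.2]
      exact hsplit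
    have hT2le : T2.card ≤ j := by omega
    simp only [Finset.mem_image]
    refine ⟨i + T2.card, by simp only [Finset.mem_Icc]; omega, ?_⟩
    rw [hSk]
    ext q
    simp only [Finset.mem_filter, Finset.mem_univ, true_and]
    have hmemS : q ∈ S ↔ (q.val < T1.card ∨ (i ≤ q.val ∧ q.val < i + T2.card)) := by
      constructor
      · intro h
        by_cases hqi : q.val < i
        · left
          have hqT1 : q ∈ T1 := by rw [hT1]; exact Finset.mem_filter.mpr ⟨h, hqi⟩
          rw [hT1eq] at hqT1
          simp only [Finset.mem_filter, Finset.mem_univ, true_and] at hqT1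
          omega
        · right
          have hqT2 : q ∈ T2 := by rw [hT2]; exact Finset.mem_filter.mpr ⟨h, le_of_not_gt hqi⟩
          rw [hT2eq] at hqT2
          simp only [Finset.mem_filter, Finset.mem_univ, true_and] at hqT2
          exact hqT2
      · rintro (h | h)
        · have hqT1 : q ∈ T1 := by
            rw [hT1eq]
            simp only [Finset.mem_filter, Finset.mem_univ, true_and]
            omega
          rw [hT1] at hqT1
          exact (Finset.mem_filter.mp hqT1).1
        · have hqT2 : q ∈ T2 := by
            rw [hT2eq]
            simp only [Finset.mem_filter, Finset.mem_univ, true_and]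
            exact h
          rw [hT2] at hqT2
          exact (Finset.mem_filter.mp hqT2).1
    rw [hmemS]
    omega

/-- for `i ≥ j ≥ 0` with `i + j ≤ n`, the product of elementary symmetric
polynomials in `n` variables expands in the Schur basis as
`e_i · e_j = Σ_{k=i}^{i+j} s_{(2^{i+j-k}, 1^{2k-i-j})}`.  Since `s_μ = a_{μ+δ}/a_δ`
(bialternant formula) and all partitions `(2^{i+j-k}, 1^{2k-i-j})` occurring have
`k ≤ i + j ≤ n` rows, this is stated equivalently (clearing the denominator `a_δ`) as
`a_δ · e_i · e_j = Σ_{k=i}^{i+j} a_{(2^{i+j-k}, 1^{2k-i-j}) + δ}`. -/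
theorem esymm_mul_esymm_schur_expansion (n i j : ℕ) (hji : j ≤ i) (hijn : i + j ≤ n) :
    alternant n (fun _ => 0) * MvPolynomial.esymm (Fin n) ℂ i * MvPolynomial.esymm (Fin n) ℂ j
      = ∑ k ∈ Finset.Icc i (i + j), alternant n (colShape (i + j - k) (2 * k - i - j)) := by
  have e0 : alternant n (fun _ => 0) * MvPolynomial.esymm (Fin n) ℂ i
      = alternant n (colShape 0 i) := by
    rw [show alternant n (fun _ => 0) = D n (fun q => 0 + (n - 1 - q.val)) from rfl]
    rw [key n i (fun q => 0 + (n - 1 - q.val))]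
    exact stepB n i (by omega)
  have e1 : alternant n (colShape 0 i) * MvPolynomial.esymm (Fin n) ℂ j
      = ∑ k ∈ Finset.Icc i (i + j), alternant n (colShape (i + j - k) (2 * k - i - j)) := by
    rw [show alternant n (colShape 0 i)
        = D n (fun q => colShape 0 i q.val + (n - 1 - q.val)) from rfl]
    rw [key n j (fun q => colShape 0 i q.val + (n - 1 - q.val))]
    exact stepD n i j hji hijn
  rw [e0, e1]
end
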